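/- arXiv:2308.15598 — 4 statements merged into one kernel-verified Lean document; each statement's English description precedes it below -/
import Mathlib

section
/- Let (α, S, β) be a reducible decomposition of the facet family 𝓕, let ψ : ℝ^R → ℝ^{R_α} × ℝ^{R_β} be the linear map sending u to the pair (u_α, u_β) of its α- and β-marginals, and let q ∈ M_𝓕. Then Q_q = ( P + ker ψ ) ∩ Δ_R, where P = { u : R → ℝ : there exist v ∈ Q^α_{q_α} and w ∈ Q^β_{q_β} with u_x = v(x_α)·w(x_β)/q_S(x_S) for all x ∈ R } and + denotes Minkowski sum. (Every q ∈ M_𝓕 has strictly positive entries, so q_S is strictly positive.) -/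
open scoped BigOperators Pointwise

attribute [local instance] Classical.propDecidable

def simplex (ι : Type*) [Fintype ι] : Set (ι → ℝ) :=
  {p | (∀ i, 0 ≤ p i) ∧ ∑ i, p i = 1}

noncomputable def KL {ι : Type*} [Fintype ι] (p q : ι → ℝ) : EReal :=
  if ∀ i, q i = 0 → p i = 0 then (((∑ i, p i * Real.log (p i / q i)) : ℝ) : EReal) else ⊤

noncomputable def divFrom {ι : Type*} [Fintype ι] (M : Set (ι → ℝ)) (p : ι → ℝ) : EReal :=
  ⨅ q ∈ M, KL p q

/-- The `F`-marginal of a function on the full state space `∀ i, Fin (d i)`. -/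
noncomputable def margF {m : ℕ} (d : Fin m → ℕ) (F : Finset (Fin m))
    (p : (∀ i, Fin (d i)) → ℝ) : ((i : {j // j ∈ F}) → Fin (d i.1)) → ℝ :=
  fun y => ∑ x : ∀ i, Fin (d i), if (∀ i : {j // j ∈ F}, x i.1 = y i) then p x else 0

/-- The `F`-marginal of a function on the partial state space indexed by `α` (meant for
`F ⊆ α`; indices of `F` outside `α` are ignored). -/
noncomputable def margSub {m : ℕ} (d : Fin m → ℕ) (α F : Finset (Fin m))
    (u : ((i : {j // j ∈ α}) → Fin (d i.1)) → ℝ) :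
    ((i : {j // j ∈ F}) → Fin (d i.1)) → ℝ :=
  fun y => ∑ xa : (i : {j // j ∈ α}) → Fin (d i.1),
    if (∀ (i : Fin m) (hiF : i ∈ F) (hia : i ∈ α), xa ⟨i, hia⟩ = y ⟨i, hiF⟩)
      then u xa else 0

/-- The hierarchical log-linear model with facet family `𝓕` on the full state space. -/
noncomputable def hierModel {m : ℕ} (d : Fin m → ℕ) (𝓕 : Finset (Finset (Fin m))) :
    Set ((∀ i, Fin (d i)) → ℝ) :=
  {p | p ∈ simplex (∀ i, Fin (d i)) ∧
    ∃ θ : (F : {F // F ∈ 𝓕}) → (((i : {j // j ∈ F.1}) → Fin (d i.1)) → ℝ),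
      (∀ F y, 0 < θ F y) ∧ ∃ Z : ℝ, 0 < Z ∧
        ∀ x, p x = (1 / Z) * ∏ F : {F // F ∈ 𝓕}, θ F (fun i => x i.1)}

/-- The hierarchical log-linear model on the partial state space indexed by `α`, for a facet
family `𝓕'` all of whose members are contained in `α`. -/
noncomputable def hierModelSub {m : ℕ} (d : Fin m → ℕ) (α : Finset (Fin m))
    (𝓕' : Finset (Finset (Fin m))) (h : ∀ F ∈ 𝓕', F ⊆ α) :
    Set (((i : {j // j ∈ α}) → Fin (d i.1)) → ℝ) :=
  {p | p ∈ simplex ((i : {j // j ∈ α}) → Fin (d i.1)) ∧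
    ∃ θ : (F : {F // F ∈ 𝓕'}) → (((i : {j // j ∈ F.1}) → Fin (d i.1)) → ℝ),
      (∀ F y, 0 < θ F y) ∧ ∃ Z : ℝ, 0 < Z ∧
        ∀ xa, p xa = (1 / Z) * ∏ F : {F // F ∈ 𝓕'},
          θ F (fun i => xa ⟨i.1, h F.1 F.2 i.2⟩)}

/-!
Marginalizing is pushing a function forward along a coordinate restriction, so it is linear and
functorial. Because `α ∪ β` covers all coordinates, the full state space is the fibre product of the
`α`- and `β`-state spaces over the `S`-state space, `S = α ∩ β`. Base change along this pullback
square and the projection formula show that if `v_S = w_S = q_S`, then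
`u_x = v(x_α) w(x_β) / q_S(x_S)` has `α`-marginal `v` and `β`-marginal `w`; the hypothesis
`v_S = q_S` follows from the facet through `S` inside `α` (similarly for `w`). Every facet lies
in `α` or in `β`, so whether `u ∈ Q_q` holds depends only on `u_α` and `u_β`. Hence a point `u`
of `Q_q` is the product point built from `u_α` and `u_β` plus a vector with vanishing
`α`- and `β`-marginals, and every such sum in `Δ_R` lies in `Q_q`.
-/

section Pushforward

variable {X Y Z R : Type*} [Fintype X]

noncomputable def pushforward [Semiring R] (π : X → Y) : (X → R) →ₗ[R] (Y → R) where
  toFun u y := ∑ x with π x = y, u x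
  map_add' u v := by ext y; simp [Finset.sum_add_distrib]
  map_smul' c u := by ext y; simp [Finset.mul_sum]

section Semiring

variable [Semiring R]

lemma pushforward_apply (π : X → Y) (u : X → R) (y : Y) :
    pushforward π u y = ∑ x with π x = y, u x := rfl

lemma sum_pushforward [Fintype Y] (π : X → Y) (u : X → R) :
    ∑ y, pushforward π u y = ∑ x, u x :=
  Finset.sum_fiberwise _ π u

lemma pushforward_pushforward [Fintype Y] (f : X → Y) (g : Y → Z) (u : X → R) :
    pushforward g (pushforward f u) = pushforward (g ∘ f) u := by
  ext z
  simp only [pushforward_apply, Function.comp_apply]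
  rw [← Finset.sum_fiberwise_of_maps_to (s := {x | g (f x) = z}) (t := {y | g y = z}) (g := f)
    (by simp)]
  refine Finset.sum_congr rfl fun y hy => Finset.sum_congr ?_ fun _ _ => rfl
  ext x
  simp only [Finset.mem_filter, Finset.mem_univ, true_and] at hy ⊢
  constructor
  · rintro rfl; exact ⟨hy, rfl⟩
  · exact fun h => h.2

lemma pushforward_mul_comp (π : X → Y) (f : Y → R) (g : X → R) :
    pushforward π (fun x => f (π x) * g x) = f * pushforward π g := by
  ext y
  simp only [pushforward_apply, Pi.mul_apply, Finset.mul_sum]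
  exact Finset.sum_congr rfl fun x hx => by rw [(Finset.mem_filter.1 hx).2]

lemma pushforward_comp_of_pullback {A B S : Type*} [Fintype B]
    {a : X → A} {b : X → B} {sA : A → S} {sB : B → S}
    (hpb : ∀ y z, sA y = sB z → ∃! x, a x = y ∧ b x = z) (hcomm : ∀ x, sA (a x) = sB (b x))
    (g : B → R) : pushforward a (g ∘ b) = pushforward sB g ∘ sA := by
  ext y
  simp only [pushforward_apply, Function.comp_apply]
  refine Finset.sum_nbij b ?_ ?_ ?_ fun _ _ => rfl
  · intro x hx
    simp only [Finset.mem_filter, Finset.mem_univ, true_and] at hx ⊢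
    rw [← hx, hcomm]
  · intro x₁ hx₁ x₂ hx₂ h
    simp only [Finset.coe_filter, Finset.mem_univ, true_and, Set.mem_ofPred_eq] at hx₁ hx₂
    obtain ⟨x, -, hx⟩ := hpb y (b x₁) (by rw [← hx₁, hcomm])
    exact (hx x₁ ⟨hx₁, rfl⟩).trans (hx x₂ ⟨hx₂, h.symm⟩).symm
  · intro z hz
    simp only [Finset.coe_filter, Finset.mem_univ, true_and, Set.mem_ofPred_eq,
      Set.mem_image] at hz ⊢
    obtain ⟨x, ⟨hxa, hxb⟩, -⟩ := hpb y z hz.symm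
    exact ⟨x, hxa, hxb⟩

end Semiring

lemma pushforward_mul_div_of_pullback {A B S K : Type*} [Fintype B] [Field K]
    {a : X → A} {b : X → B} {sA : A → S} {sB : B → S}
    (hpb : ∀ y z, sA y = sB z → ∃! x, a x = y ∧ b x = z) (hcomm : ∀ x, sA (a x) = sB (b x))
    (v : A → K) (w : B → K) (q : S → K) (hq : ∀ s, q s ≠ 0) (hw : pushforward sB w = q) :
    pushforward a (fun x => v (a x) * w (b x) / q (sA (a x))) = v := by
  calc pushforward a (fun x => v (a x) * w (b x) / q (sA (a x)))
      = pushforward a (fun x => (v / q ∘ sA) (a x) * (w ∘ b) x) := by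
        congr 1; ext x; simp only [Pi.div_apply, Function.comp_apply, div_mul_eq_mul_div]
    _ = (v / q ∘ sA) * (pushforward sB w ∘ sA) := by
        rw [pushforward_mul_comp, pushforward_comp_of_pullback hpb hcomm]
    _ = v := by
        ext y
        simp only [hw, Pi.mul_apply, Pi.div_apply, Function.comp_apply, div_mul_cancel₀ _ (hq _)]

lemma pushforward_mem_simplex [Fintype Y] (π : X → Y) {u : X → ℝ} (hu : u ∈ simplex X) :
    pushforward π u ∈ simplex Y :=
  ⟨fun _ => Finset.sum_nonneg fun x _ => hu.1 x, (sum_pushforward π u).trans hu.2⟩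

lemma pushforward_pos {π : X → Y} (hπ : Function.Surjective π) {u : X → ℝ}
    (hu : ∀ x, 0 < u x) (y : Y) : 0 < pushforward π u y := by
  obtain ⟨x, rfl⟩ := hπ y
  exact Finset.sum_pos (fun x _ => hu x) ⟨x, by simp⟩

end Pushforward

section Restriction

variable {ι : Type*} {π : ι → Type*}

lemma Finset.restrict_surjective [Nonempty (∀ i, π i)] (s : Finset ι) :
    Function.Surjective (s.restrict (π := π)) := by
  intro y
  obtain ⟨x⟩ := ‹Nonempty (∀ i, π i)›
  exact ⟨fun i => if h : i ∈ s then y ⟨i, h⟩ else x i, funext fun i => dif_pos i.2⟩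

lemma Finset.existsUnique_restrict_eq [Fintype ι] [DecidableEq ι] {s t u : Finset ι}
    (hus : u ⊆ s) (hut : u ⊆ t) (hst : s ∪ t = Finset.univ) (hu : s ∩ t ⊆ u)
    (y : (i : s) → π i) (z : (i : t) → π i)
    (hyz : Finset.restrict₂ hus y = Finset.restrict₂ hut z) :
    ∃! x : (∀ i, π i), s.restrict x = y ∧ t.restrict x = z := by
  have ht : ∀ i, i ∉ s → i ∈ t := fun i hi =>
    (Finset.mem_union.1 (hst ▸ Finset.mem_univ i)).resolve_left hi
  refine ⟨fun i => if h : i ∈ s then y ⟨i, h⟩ else z ⟨i, ht i h⟩,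
    ⟨funext fun i => dif_pos i.2, funext fun i => ?_⟩, ?_⟩
  · by_cases h : i.1 ∈ s
    · simpa [h] using congrFun hyz ⟨i.1, hu (Finset.mem_inter.2 ⟨h, i.2⟩)⟩
    · simp [h]
  · rintro x ⟨rfl, rfl⟩
    funext i
    by_cases h : i ∈ s <;> simp [h]

end Restriction

section Marginals

variable {m : ℕ} (d : Fin m → ℕ)

lemma margF_eq_pushforward (F : Finset (Fin m)) (p : (∀ i, Fin (d i)) → ℝ) :
    margF d F p = pushforward F.restrict p := by
  ext y
  simp only [margF, pushforward_apply, Finset.sum_filter, funext_iff, Finset.restrict]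

lemma margSub_eq_pushforward {α F : Finset (Fin m)} (hF : F ⊆ α)
    (u : ((i : {j // j ∈ α}) → Fin (d i.1)) → ℝ) :
    margSub d α F u = pushforward (Finset.restrict₂ (π := fun i => Fin (d i)) hF) u := by
  ext y
  simp only [margSub, pushforward_apply, Finset.sum_filter, funext_iff, Finset.restrict₂]
  refine Finset.sum_congr rfl fun x _ => if_congr ?_ rfl rfl
  exact ⟨fun h i => h i.1 i.2 (hF i.2), fun h i hiF _ => h ⟨i, hiF⟩⟩

lemma margSub_margF {α F : Finset (Fin m)} (hF : F ⊆ α) (p : (∀ i, Fin (d i)) → ℝ) :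
    margSub d α F (margF d α p) = margF d F p := by
  rw [margSub_eq_pushforward d hF, margF_eq_pushforward, margF_eq_pushforward,
    pushforward_pushforward, Finset.restrict₂_comp_restrict]

lemma margSub_margSub {α F S : Finset (Fin m)} (hSF : S ⊆ F) (hFα : F ⊆ α)
    (u : ((i : {j // j ∈ α}) → Fin (d i.1)) → ℝ) :
    margSub d F S (margSub d α F u) = margSub d α S u := by
  rw [margSub_eq_pushforward d hSF, margSub_eq_pushforward d hFα,
    margSub_eq_pushforward d (hSF.trans hFα), pushforward_pushforward,
    Finset.restrict₂_comp_restrict₂]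

lemma margF_add (F : Finset (Fin m)) (u v : (∀ i, Fin (d i)) → ℝ) :
    margF d F (u + v) = margF d F u + margF d F v := by
  simp only [margF_eq_pushforward, map_add]

lemma margF_sub (F : Finset (Fin m)) (u v : (∀ i, Fin (d i)) → ℝ) :
    margF d F (u - v) = margF d F u - margF d F v := by
  simp only [margF_eq_pushforward, map_sub]

lemma margF_mem_simplex (F : Finset (Fin m)) {u : (∀ i, Fin (d i)) → ℝ}
    (hu : u ∈ simplex (∀ i, Fin (d i))) :
    margF d F u ∈ simplex ((i : {j // j ∈ F}) → Fin (d i.1)) :=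
  margF_eq_pushforward d F u ▸ pushforward_mem_simplex _ hu

lemma pos_of_mem_hierModel {𝓕 : Finset (Finset (Fin m))} {q : (∀ i, Fin (d i)) → ℝ}
    (hq : q ∈ hierModel d 𝓕) (x : ∀ i, Fin (d i)) : 0 < q x := by
  obtain ⟨-, θ, hθ, Z, hZ, hq⟩ := hq
  rw [hq]
  exact mul_pos (by positivity) (Finset.prod_pos fun F _ => hθ F _)

lemma margF_pos_of_mem_hierModel {𝓕 : Finset (Finset (Fin m))} {q : (∀ i, Fin (d i)) → ℝ}
    (hq : q ∈ hierModel d 𝓕) (F : Finset (Fin m)) (y : (i : {j // j ∈ F}) → Fin (d i.1)) :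
    0 < margF d F q y := by
  have : Nonempty (∀ i, Fin (d i)) := by
    obtain ⟨x, -, -⟩ := Finset.exists_ne_zero_of_sum_ne_zero (hq.1.2.trans_ne one_ne_zero)
    exact ⟨x⟩
  rw [margF_eq_pushforward]
  exact pushforward_pos (Finset.restrict_surjective F) (pos_of_mem_hierModel d hq) y

end Marginals

section Decomposition

variable {m : ℕ} (d : Fin m → ℕ) {α β : Finset (Fin m)}

lemma facet_margF_eq_iff {𝓕 : Finset (Finset (Fin m))} (hsplit : ∀ F ∈ 𝓕, F ⊆ α ∨ F ⊆ β)
    (u q : (∀ i, Fin (d i)) → ℝ) :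
    (∀ F ∈ 𝓕, margF d F u = margF d F q) ↔
      (∀ F ∈ 𝓕, F ⊆ α → margSub d α F (margF d α u) = margSub d α F (margF d α q)) ∧
      (∀ F ∈ 𝓕, F ⊆ β → margSub d β F (margF d β u) = margSub d β F (margF d β q)) := by
  refine ⟨fun h => ⟨fun F hF hFα => ?_, fun F hF hFβ => ?_⟩, fun ⟨hα, hβ⟩ F hF => ?_⟩
  · rw [margSub_margF d hFα, margSub_margF d hFα, h F hF]
  · rw [margSub_margF d hFβ, margSub_margF d hFβ, h F hF]
  · rcases hsplit F hF with hFα | hFβ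
    · simpa only [margSub_margF d hFα] using hα F hF hFα
    · simpa only [margSub_margF d hFβ] using hβ F hF hFβ

lemma margSub_eq_margF_of_facet {𝓕 : Finset (Finset (Fin m))} {S : Finset (Fin m)}
    (hS : ∃ F ∈ 𝓕, S ⊆ F ∧ F ⊆ α) {q : (∀ i, Fin (d i)) → ℝ}
    {v : ((i : {j // j ∈ α}) → Fin (d i.1)) → ℝ}
    (hv : ∀ F ∈ 𝓕, F ⊆ α → margSub d α F v = margSub d α F (margF d α q)) :
    margSub d α S v = margF d S q := by
  obtain ⟨F, hF, hSF, hFα⟩ := hS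
  rw [← margSub_margSub d hSF hFα, hv F hF hFα, margSub_margSub d hSF hFα,
    margSub_margF d (hSF.trans hFα)]

lemma margF_mul_div_eq (hunion : α ∪ β = Finset.univ)
    {v : ((i : {j // j ∈ α}) → Fin (d i.1)) → ℝ} {w : ((i : {j // j ∈ β}) → Fin (d i.1)) → ℝ}
    {qS : ((i : {j // j ∈ α ∩ β}) → Fin (d i.1)) → ℝ} (hqS : ∀ s, qS s ≠ 0)
    (hv : margSub d α (α ∩ β) v = qS) (hw : margSub d β (α ∩ β) w = qS) :
    margF d α (fun x => v (fun i => x i.1) * w (fun i => x i.1) / qS (fun i => x i.1)) = v ∧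
      margF d β (fun x => v (fun i => x i.1) * w (fun i => x i.1) / qS (fun i => x i.1)) = w := by
  have hpbα := Finset.existsUnique_restrict_eq (π := fun i => Fin (d i))
    Finset.inter_subset_left Finset.inter_subset_right hunion Finset.Subset.rfl
  have hpbβ := Finset.existsUnique_restrict_eq (π := fun i => Fin (d i))
    Finset.inter_subset_right Finset.inter_subset_left ((Finset.union_comm β α).trans hunion)
    (Finset.inter_comm β α).subset
  rw [margSub_eq_pushforward d Finset.inter_subset_left] at hv
  rw [margSub_eq_pushforward d Finset.inter_subset_right] at hw
  rw [margF_eq_pushforward, margF_eq_pushforward]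
  constructor
  · exact pushforward_mul_div_of_pullback hpbα (fun _ => rfl) v w qS hqS hw
  · simp_rw [mul_comm (v _)]
    exact pushforward_mul_div_of_pullback hpbβ (fun _ => rfl) w v qS hqS hv

end Decomposition

theorem stmt12_general {m : ℕ} (d : Fin m → ℕ) (𝓕 : Finset (Finset (Fin m)))
    (α β : Finset (Fin m)) (hunion : α ∪ β = Finset.univ)
    (hsplit : ∀ F ∈ 𝓕, F ⊆ α ∨ F ⊆ β)
    (hS1 : ∃ F ∈ 𝓕, α ∩ β ⊆ F ∧ F ⊆ α)
    (hS2 : ∃ F ∈ 𝓕, α ∩ β ⊆ F ∧ F ⊆ β)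
    (q : (∀ i, Fin (d i)) → ℝ) (hq : q ∈ hierModel d 𝓕) :
    {u | u ∈ simplex (∀ i, Fin (d i)) ∧ ∀ F ∈ 𝓕, margF d F u = margF d F q} =
      ({u : (∀ i, Fin (d i)) → ℝ |
          ∃ (v : ((i : {j // j ∈ α}) → Fin (d i.1)) → ℝ)
            (w : ((i : {j // j ∈ β}) → Fin (d i.1)) → ℝ),
            (v ∈ simplex ((i : {j // j ∈ α}) → Fin (d i.1)) ∧
              ∀ F ∈ 𝓕, F ⊆ α → margSub d α F v = margSub d α F (margF d α q)) ∧
            (w ∈ simplex ((i : {j // j ∈ β}) → Fin (d i.1)) ∧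
              ∀ F ∈ 𝓕, F ⊆ β → margSub d β F w = margSub d β F (margF d β q)) ∧
            ∀ x, u x = v (fun i => x i.1) * w (fun i => x i.1) /
              margF d (α ∩ β) q (fun i => x i.1)} +
        {u : (∀ i, Fin (d i)) → ℝ | margF d α u = 0 ∧ margF d β u = 0}) ∩
      simplex (∀ i, Fin (d i)) := by
  have hqS : ∀ s, margF d (α ∩ β) q s ≠ 0 := fun s => (margF_pos_of_mem_hierModel d hq _ s).ne'
  ext u
  simp only [Set.mem_ofPred_eq, Set.mem_inter_iff, Set.mem_add, facet_margF_eq_iff d hsplit]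
  constructor
  · rintro ⟨hu, hα, hβ⟩
    obtain ⟨hpα, hpβ⟩ := margF_mul_div_eq d hunion hqS
      (margSub_eq_margF_of_facet d hS1 hα) (margSub_eq_margF_of_facet d hS2 hβ)
    refine ⟨⟨_, ⟨_, _, ⟨margF_mem_simplex d α hu, hα⟩, ⟨margF_mem_simplex d β hu, hβ⟩,
      fun _ => rfl⟩, _, ⟨?_, ?_⟩, add_sub_cancel _ u⟩, hu⟩
    · rw [margF_sub, hpα, sub_self]
    · rw [margF_sub, hpβ, sub_self]
  · rintro ⟨⟨p, ⟨v, w, ⟨-, hv⟩, ⟨-, hw⟩, hp⟩, k, ⟨hkα, hkβ⟩, rfl⟩, hu⟩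
    obtain rfl : p = _ := funext hp
    obtain ⟨hpα, hpβ⟩ := margF_mul_div_eq d hunion hqS
      (margSub_eq_margF_of_facet d hS1 hv) (margSub_eq_margF_of_facet d hS2 hw)
    refine ⟨hu, ?_, ?_⟩
    · rwa [margF_add, hpα, hkα, add_zero]
    · rwa [margF_add, hpβ, hkβ, add_zero]

/-- decomposition of the logarithmic Voronoi polytope of a reducible hierarchical
model: `Q_q = (P + ker ψ) ∩ Δ_R`, where `P` is built from points of `Q^α_{q_α}` and
`Q^β_{q_β}` via `u_x = v(x_α)·w(x_β)/q_S(x_S)` and `ker ψ` is the set of vectors with zero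
`α`- and `β`-marginals. -/
theorem stmt12 {m : ℕ} (d : Fin m → ℕ) (𝓕 : Finset (Finset (Fin m)))
    (hcov : ∀ i : Fin m, ∃ F ∈ 𝓕, i ∈ F)
    (α β : Finset (Fin m)) (hunion : α ∪ β = Finset.univ)
    (hsplit : ∀ F ∈ 𝓕, F ⊆ α ∨ F ⊆ β)
    (hS1 : ∃ F ∈ 𝓕, α ∩ β ⊆ F ∧ F ⊆ α)
    (hS2 : ∃ F ∈ 𝓕, α ∩ β ⊆ F ∧ F ⊆ β)
    (q : (∀ i, Fin (d i)) → ℝ) (hq : q ∈ hierModel d 𝓕) :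
    {u | u ∈ simplex (∀ i, Fin (d i)) ∧ ∀ F ∈ 𝓕, margF d F u = margF d F q} =
      ({u : (∀ i, Fin (d i)) → ℝ |
          ∃ (v : ((i : {j // j ∈ α}) → Fin (d i.1)) → ℝ)
            (w : ((i : {j // j ∈ β}) → Fin (d i.1)) → ℝ),
            (v ∈ simplex ((i : {j // j ∈ α}) → Fin (d i.1)) ∧
              ∀ F ∈ 𝓕, F ⊆ α → margSub d α F v = margSub d α F (margF d α q)) ∧
            (w ∈ simplex ((i : {j // j ∈ β}) → Fin (d i.1)) ∧
              ∀ F ∈ 𝓕, F ⊆ β → margSub d β F w = margSub d β F (margF d β q)) ∧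
            ∀ x, u x = v (fun i => x i.1) * w (fun i => x i.1) /
              margF d (α ∩ β) q (fun i => x i.1)} +
        {u : (∀ i, Fin (d i)) → ℝ | margF d α u = 0 ∧ margF d β u = 0}) ∩
      simplex (∀ i, Fin (d i)) :=
  stmt12_general d 𝓕 α β hunion hsplit hS1 hS2 q hq
end

section
/- Let (α, S, β) be a reducible decomposition of the facet family 𝓕, let p ∈ Δ_R have strictly positive S-marginal p_S, and let v ∈ Q^α_{p_α}, w ∈ Q^β_{p_β}. Define u : R → ℝ by u_x = v(x_α)·w(x_β)/p_S(x_S). Then u ∈ Δ_R and D_{M_𝓕}(u) = D_{M_{𝓕_α}}(v) + D_{M_{𝓕_β}}(w). -/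
open scoped BigOperators Pointwise

attribute [local instance] Classical.propDecidable

/-!
Write `v ⊗_s w` (`condProd`) for the point `x ↦ v(x_α) w(x_β) / s(x_S)`, so that
`u = v ⊗_{p_S} w`. When `v` and `w` both have `S`-marginal `s`, averaging against `v ⊗_s w`
reduces to averaging against `v` or `w`, so that for positive `A`, `B`, `E`
`D(v ⊗_s w ‖ A ⊗_E B) = D(v ‖ A) + D(w ‖ B) - D(s ‖ E)`.
Every `q ∈ M_𝓕` is a product of a function of `x_α` and one of `x_β`, hence
`q = q_α ⊗_{q_S} q_β = (q_α p_S / q_S) ⊗_{p_S} q_β`, and the two factors lie in the two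
submodels: this gives `≥`. Conversely, for `q_a`, `q_b` in the submodels, `q_a ⊗_{(q_a)_S} q_b`
lies in `M_𝓕`, and Gibbs' inequality `D(p_S ‖ (q_a)_S) ≥ 0` gives `≤`. Closures change none of
the divergences, since `D(p ‖ ·)` is continuous at every `q` with `supp p ⊆ supp q` and infinite
elsewhere.
-/

section Pushforward

variable {X Y Z : Type*} [Fintype X] [DecidableEq Y] [DecidableEq Z]

noncomputable def pushfwd (π : X → Y) (a : X → ℝ) (y : Y) : ℝ := ∑ x with π x = y, a x

lemma pushfwd_apply (π : X → Y) (a : X → ℝ) (y : Y) :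
    pushfwd π a y = ∑ x, a x * if π x = y then 1 else 0 := by
  simp [pushfwd, Finset.sum_filter]

lemma sum_pushfwd_mul [Fintype Y] (π : X → Y) (a : X → ℝ) (g : Y → ℝ) :
    ∑ y, pushfwd π a y * g y = ∑ x, a x * g (π x) := by
  simp only [pushfwd, Finset.sum_mul]
  rw [← Finset.sum_fiberwise Finset.univ π (fun x => a x * g (π x))]
  refine Finset.sum_congr rfl fun y _ => Finset.sum_congr rfl fun x hx => ?_
  rw [(Finset.mem_filter.1 hx).2]

lemma sum_pushfwd [Fintype Y] (π : X → Y) (a : X → ℝ) : ∑ y, pushfwd π a y = ∑ x, a x := by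
  simpa using sum_pushfwd_mul π a 1

lemma pushfwd_pushfwd [Fintype Y] (π : X → Y) (ρ : Y → Z) (a : X → ℝ) :
    pushfwd ρ (pushfwd π a) = pushfwd (ρ ∘ π) a := by
  funext z
  rw [pushfwd_apply, sum_pushfwd_mul, pushfwd_apply]
  rfl

lemma pushfwd_mul_comp (π : X → Y) (a : X → ℝ) (g : Y → ℝ) (y : Y) :
    pushfwd π (fun x => a x * g (π x)) y = pushfwd π a y * g y := by
  rw [pushfwd, pushfwd, Finset.sum_mul]
  exact Finset.sum_congr rfl fun x hx => by rw [(Finset.mem_filter.1 hx).2]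

lemma pushfwd_pos {π : X → Y} (hπ : Function.Surjective π) {a : X → ℝ} (ha : ∀ x, 0 < a x)
    (y : Y) : 0 < pushfwd π a y := by
  obtain ⟨x, rfl⟩ := hπ y
  exact Finset.sum_pos (fun x _ => ha x) ⟨x, by simp⟩

end Pushforward

lemma EReal.le_biInf_add_biInf {X Y : Type*} {s : Set X} {t : Set Y} {f : X → EReal}
    {g : Y → EReal} {c : EReal} (hf : ⨅ x ∈ s, f x ≠ ⊥) (hg : ⨅ y ∈ t, g y ≠ ⊥)
    (h : ∀ x ∈ s, ∀ y ∈ t, c ≤ f x + g y) : c ≤ (⨅ x ∈ s, f x) + ⨅ y ∈ t, g y := by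
  refine EReal.le_add_of_forall_gt (.inl hf) (.inr hg) fun a ha b hb => ?_
  obtain ⟨x, hx, hxa⟩ := lt_biInf_iff.1 ha
  obtain ⟨y, hy, hyb⟩ := lt_biInf_iff.1 hb
  exact (h x hx y hy).trans (add_le_add hxa.le hyb.le)

section Divergence

open Filter Topology

variable {ι : Type*} [Fintype ι]

lemma nonempty_of_mem_simplex {p : ι → ℝ} (hp : p ∈ simplex ι) :
    Nonempty ι := by
  by_contra h
  rw [not_nonempty_iff] at h
  simpa using hp.2

noncomputable def klSum (p q : ι → ℝ) : ℝ := ∑ i, p i * Real.log (p i / q i)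

lemma KL_eq_klSum {p q : ι → ℝ} (h : ∀ i, q i = 0 → p i = 0) : KL p q = klSum p q :=
  if_pos h

lemma KL_of_pos (p : ι → ℝ) {q : ι → ℝ} (hq : ∀ i, 0 < q i) : KL p q = klSum p q :=
  KL_eq_klSum fun i h => absurd h (hq i).ne'

lemma klSum_nonneg {p q : ι → ℝ} (hp : ∀ i, 0 ≤ p i) (hq : ∀ i, 0 < q i)
    (hsum : ∑ i, p i = ∑ i, q i) : 0 ≤ klSum p q := by
  have key : ∀ i, p i - q i ≤ p i * Real.log (p i / q i) := fun i => by
    rcases (hp i).eq_or_lt with h | h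
    · simp [← h, (hq i).le]
    · have := Real.one_sub_inv_le_log_of_pos (div_pos h (hq i))
      rw [inv_div] at this
      calc p i - q i = p i * (1 - q i / p i) := by field_simp
        _ ≤ _ := mul_le_mul_of_nonneg_left this h.le
  calc (0 : ℝ) = ∑ i, (p i - q i) := by rw [Finset.sum_sub_distrib, hsum, sub_self]
    _ ≤ klSum p q := Finset.sum_le_sum fun i _ => key i

lemma tendsto_KL {α : Type*} {l : Filter α} {p q : ι → ℝ} {qn : α → ι → ℝ}
    (hqn : Tendsto qn l (𝓝 q)) (h : ∀ i, q i = 0 → p i = 0) :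
    Tendsto (fun n => KL p (qn n)) l (𝓝 (KL p q)) := by
  have hsupp : ∀ᶠ n in l, ∀ i, qn n i = 0 → p i = 0 := by
    refine eventually_all.2 fun i => ?_
    by_cases hpi : p i = 0
    · exact Eventually.of_forall fun _ _ => hpi
    · filter_upwards [(tendsto_pi_nhds.1 hqn i).eventually_ne (mt (h i) hpi)] with n hn hz
      exact absurd hz hn
  rw [KL_eq_klSum h]
  refine Tendsto.congr' (hsupp.mono fun n hn => (KL_eq_klSum hn).symm) ?_
  refine (continuous_coe_real_ereal.tendsto _).comp (tendsto_finsetSum _ fun i _ => ?_)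
  by_cases hpi : p i = 0
  · simpa [hpi] using tendsto_const_nhds
  · exact ((tendsto_const_nhds.div (tendsto_pi_nhds.1 hqn i) (mt (h i) hpi)).log
      (div_ne_zero hpi (mt (h i) hpi))).const_mul _

lemma divFrom_closure (M : Set (ι → ℝ)) (p : ι → ℝ) : divFrom (closure M) p = divFrom M p := by
  refine le_antisymm (biInf_mono fun q hq => subset_closure hq) (le_iInf₂ fun q hq => ?_)
  by_cases h : ∀ i, q i = 0 → p i = 0
  · obtain ⟨qn, hqnM, hqn⟩ := mem_closure_iff_seq_limit.1 hq
    exact ge_of_tendsto (tendsto_KL hqn h) (Eventually.of_forall fun n => iInf₂_le _ (hqnM n))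
  · rw [KL, if_neg h]
    exact le_top

lemma divFrom_eq_biInf_klSum {M : Set (ι → ℝ)} (hM : ∀ q ∈ M, ∀ i, 0 < q i) (p : ι → ℝ) :
    divFrom M p = ⨅ q ∈ M, (klSum p q : EReal) :=
  biInf_congr fun q hq => KL_of_pos p (hM q hq)

lemma biInf_klSum_ne_bot {M : Set (ι → ℝ)} {p : ι → ℝ}
    (hp : p ∈ simplex ι) (hM : ∀ q ∈ M, q ∈ simplex ι) (hMpos : ∀ q ∈ M, ∀ i, 0 < q i) :
    ⨅ q ∈ M, (klSum p q : EReal) ≠ ⊥ :=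
  ne_bot_of_le_ne_bot EReal.zero_ne_bot <| le_iInf₂ fun q hq => EReal.coe_nonneg.2 <|
    klSum_nonneg hp.1 (hMpos q hq) (by rw [hp.2, (hM q hq).2])

end Divergence

namespace HierarchicalModel

variable {m : ℕ} {d : Fin m → ℕ}

abbrev State (d : Fin m → ℕ) (γ : Finset (Fin m)) := (i : {j // j ∈ γ}) → Fin (d i.1)

def restr (γ : Finset (Fin m)) (x : ∀ i, Fin (d i)) : State d γ := fun i => x i.1

def restrSub {T γ : Finset (Fin m)} (h : T ⊆ γ) (xa : State d γ) : State d T :=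
  fun i => xa ⟨i.1, h i.2⟩

@[simp]
lemma restrSub_restr {T γ : Finset (Fin m)} (h : T ⊆ γ) (x : ∀ i, Fin (d i)) :
    restrSub h (restr γ x) = restr T x := rfl

lemma restrSub_comp_restrSub {T F γ : Finset (Fin m)} (hTF : T ⊆ F) (hFγ : F ⊆ γ) :
    restrSub hTF ∘ restrSub hFγ = restrSub (d := d) (hTF.trans hFγ) := rfl

lemma restr_surjective [Nonempty (∀ i, Fin (d i))] (γ : Finset (Fin m)) :
    Function.Surjective (restr (d := d) γ) := by
  obtain ⟨x₀⟩ := ‹Nonempty (∀ i, Fin (d i))›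
  intro xa
  refine ⟨fun i => if h : i ∈ γ then xa ⟨i, h⟩ else x₀ i, funext fun i => ?_⟩
  simp [restr, i.2]

lemma restrSub_surjective [Nonempty (∀ i, Fin (d i))] {T γ : Finset (Fin m)} (h : T ⊆ γ) :
    Function.Surjective (restrSub (d := d) h) := fun y => by
  obtain ⟨x, rfl⟩ := restr_surjective T y
  exact ⟨restr γ x, rfl⟩

lemma margF_eq_pushfwd (T : Finset (Fin m)) (p : (∀ i, Fin (d i)) → ℝ) :
    margF d T p = pushfwd (restr T) p := by
  funext y
  simp only [margF, pushfwd, Finset.sum_filter, restr, funext_iff]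

lemma margSub_eq_pushfwd {T γ : Finset (Fin m)} (h : T ⊆ γ) (a : State d γ → ℝ) :
    margSub d γ T a = pushfwd (restrSub h) a := by
  funext y
  simp only [margSub, pushfwd, Finset.sum_filter, restrSub, funext_iff, Subtype.forall]
  refine Finset.sum_congr rfl fun xa _ => if_congr ⟨fun hy i hi => hy i hi (h hi),
    fun hy i hi _ => hy i hi⟩ rfl rfl

lemma sum_margF (T : Finset (Fin m)) (q : (∀ i, Fin (d i)) → ℝ) :
    ∑ y, margF d T q y = ∑ x, q x := by
  rw [margF_eq_pushfwd, sum_pushfwd]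

lemma sum_margSub {T γ : Finset (Fin m)} (h : T ⊆ γ) (a : State d γ → ℝ) :
    ∑ y, margSub d γ T a y = ∑ xa, a xa := by
  rw [margSub_eq_pushfwd h, sum_pushfwd]

lemma margF_pos [Nonempty (∀ i, Fin (d i))] {T : Finset (Fin m)} {q : (∀ i, Fin (d i)) → ℝ}
    (hq : ∀ x, 0 < q x) (y : State d T) : 0 < margF d T q y := by
  rw [margF_eq_pushfwd]
  exact pushfwd_pos (restr_surjective T) hq y

lemma margSub_pos [Nonempty (∀ i, Fin (d i))] {T γ : Finset (Fin m)} (h : T ⊆ γ)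
    {a : State d γ → ℝ} (ha : ∀ xa, 0 < a xa) (y : State d T) : 0 < margSub d γ T a y := by
  rw [margSub_eq_pushfwd h]
  exact pushfwd_pos (restrSub_surjective h) ha y

lemma margSub_margSub {T F γ : Finset (Fin m)} (hTF : T ⊆ F) (hFγ : F ⊆ γ)
    (a : State d γ → ℝ) : margSub d F T (margSub d γ F a) = margSub d γ T a := by
  rw [margSub_eq_pushfwd hFγ, margSub_eq_pushfwd hTF, pushfwd_pushfwd,
    restrSub_comp_restrSub, margSub_eq_pushfwd]

lemma margSub_margF {T γ : Finset (Fin m)} (h : T ⊆ γ) (p : (∀ i, Fin (d i)) → ℝ) :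
    margSub d γ T (margF d γ p) = margF d T p := by
  rw [margF_eq_pushfwd, margSub_eq_pushfwd h, pushfwd_pushfwd, margF_eq_pushfwd]
  rfl

lemma margSub_eq_of_margSub_eq {T F γ : Finset (Fin m)} (hTF : T ⊆ F) (hFγ : F ⊆ γ)
    {a b : State d γ → ℝ} (h : margSub d γ F a = margSub d γ F b) :
    margSub d γ T a = margSub d γ T b := by
  rw [← margSub_margSub hTF hFγ, h, margSub_margSub hTF hFγ]

structure IsDecomposition (α β S : Finset (Fin m)) : Prop where
  union : α ∪ β = Finset.univ
  left : S ⊆ α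
  right : S ⊆ β
  inter : α ∩ β ⊆ S

variable {α β S : Finset (Fin m)}

lemma IsDecomposition.symm (h : IsDecomposition α β S) :
    IsDecomposition β α S :=
  ⟨by rw [Finset.union_comm, h.union], h.right, h.left, by rw [Finset.inter_comm]; exact h.inter⟩

lemma mem_right_of_notMem_left (hU : α ∪ β = Finset.univ) {i : Fin m} (h : i ∉ α) : i ∈ β :=
  (Finset.mem_union.1 (hU ▸ Finset.mem_univ i)).resolve_left h

def glue (hU : α ∪ β = Finset.univ) (xa : State d α) (xb : State d β) : ∀ i, Fin (d i) :=
  fun i => if h : i ∈ α then xa ⟨i, h⟩ else xb ⟨i, mem_right_of_notMem_left hU h⟩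

lemma restr_glue_left (hU : α ∪ β = Finset.univ) (xa : State d α) (xb : State d β) :
    restr α (glue hU xa xb) = xa :=
  funext fun i => dif_pos i.2

lemma restr_glue_right (hαβ : IsDecomposition α β S) {xa : State d α} {xb : State d β}
    (hagree : restrSub hαβ.right xb = restrSub hαβ.left xa) :
    restr β (glue hαβ.union xa xb) = xb := by
  funext i
  by_cases hi : i.1 ∈ α
  · have hiS : i.1 ∈ S := hαβ.inter (Finset.mem_inter.2 ⟨hi, i.2⟩)
    exact (dif_pos hi).trans (congrFun hagree ⟨i.1, hiS⟩).symm
  · exact dif_neg hi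

lemma glue_restr (hU : α ∪ β = Finset.univ) (x : ∀ i, Fin (d i)) :
    glue hU (restr α x) (restr β x) = x :=
  funext fun i => by by_cases hi : i ∈ α <;> simp [glue, restr, hi]

lemma sum_restr_eq_margSub (hαβ : IsDecomposition α β S) (b : State d β → ℝ) (xa : State d α) :
    ∑ x with restr α x = xa, b (restr β x) = margSub d β S b (restrSub hαβ.left xa) := by
  rw [margSub_eq_pushfwd hαβ.right, pushfwd]
  refine Finset.sum_nbij' (restr β) (glue hαβ.union xa) ?_ ?_ ?_ ?_ (fun _ _ => rfl)
  · rintro x hx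
    rw [Finset.mem_filter] at hx ⊢
    exact ⟨Finset.mem_univ _, by rw [← hx.2]; rfl⟩
  · rintro xb hxb
    exact Finset.mem_filter.2 ⟨Finset.mem_univ _, restr_glue_left hαβ.union xa xb⟩
  · rintro x hx
    rw [← (Finset.mem_filter.1 hx).2, glue_restr hαβ.union]
  · rintro xb hxb
    exact restr_glue_right hαβ (Finset.mem_filter.1 hxb).2

lemma margF_left_of_eq_mul (hαβ : IsDecomposition α β S) {a : State d α → ℝ} {b : State d β → ℝ}
    {q : (∀ i, Fin (d i)) → ℝ} (hq : ∀ x, q x = a (restr α x) * b (restr β x)) (xa : State d α) :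
    margF d α q xa = a xa * margSub d β S b (restrSub hαβ.left xa) := by
  rw [margF_eq_pushfwd, pushfwd, ← sum_restr_eq_margSub hαβ, Finset.mul_sum]
  exact Finset.sum_congr rfl fun x hx => by rw [hq, (Finset.mem_filter.1 hx).2]

lemma margF_right_of_eq_mul (hαβ : IsDecomposition α β S) {a : State d α → ℝ} {b : State d β → ℝ}
    {q : (∀ i, Fin (d i)) → ℝ} (hq : ∀ x, q x = a (restr α x) * b (restr β x)) (xb : State d β) :
    margF d β q xb = b xb * margSub d α S a (restrSub hαβ.right xb) :=
  margF_left_of_eq_mul hαβ.symm (fun x => (hq x).trans (mul_comm _ _)) xb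

lemma sum_restr_mul_restr (hαβ : IsDecomposition α β S) (a : State d α → ℝ) (b : State d β → ℝ) :
    ∑ x, a (restr α x) * b (restr β x) = ∑ xa, a xa * margSub d β S b (restrSub hαβ.left xa) := by
  rw [← sum_pushfwd (restr α), ← margF_eq_pushfwd]
  exact Finset.sum_congr rfl fun xa _ => margF_left_of_eq_mul hαβ (fun _ => rfl) xa

noncomputable def condProd (α β S : Finset (Fin m)) (v : State d α → ℝ) (w : State d β → ℝ)
    (s : State d S → ℝ) (x : ∀ i, Fin (d i)) : ℝ :=
  v (restr α x) * w (restr β x) / s (restr S x)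

lemma condProd_comm (v : State d α → ℝ) (w : State d β → ℝ) (s : State d S → ℝ) :
    condProd β α S w v s = condProd α β S v w s :=
  funext fun x => by rw [condProd, condProd, mul_comm]

lemma sum_condProd_mul_left (hαβ : IsDecomposition α β S) (v : State d α → ℝ) {w : State d β → ℝ}
    {s : State d S → ℝ} (hw : margSub d β S w = s) (hs : ∀ y, s y ≠ 0) (g : State d α → ℝ) :
    ∑ x, condProd α β S v w s x * g (restr α x) = ∑ xa, v xa * g xa := by
  have h := sum_restr_mul_restr hαβ (fun xa => v xa * g xa / s (restrSub hαβ.left xa)) w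
  rw [hw] at h
  convert h using 2 with x _ xa
  · rw [condProd, ← restrSub_restr hαβ.left]; ring
  · rw [div_mul_cancel₀ _ (hs _)]

lemma sum_condProd_mul_right (hαβ : IsDecomposition α β S) {v : State d α → ℝ} (w : State d β → ℝ)
    {s : State d S → ℝ} (hv : margSub d α S v = s) (hs : ∀ y, s y ≠ 0) (g : State d β → ℝ) :
    ∑ x, condProd α β S v w s x * g (restr β x) = ∑ xb, w xb * g xb := by
  rw [← condProd_comm]
  exact sum_condProd_mul_left hαβ.symm w hv hs g

lemma condProd_mem_simplex (hαβ : IsDecomposition α β S) {v : State d α → ℝ} {w : State d β → ℝ}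
    {s : State d S → ℝ} (hv : margSub d α S v = s) (hv₀ : ∀ xa, 0 ≤ v xa) (hw : w ∈ simplex _)
    (hs : ∀ y, 0 < s y) : condProd α β S v w s ∈ simplex _ := by
  refine ⟨fun x => div_nonneg (mul_nonneg (hv₀ _) (hw.1 _)) (hs _).le, ?_⟩
  simpa [hw.2] using sum_condProd_mul_right hαβ w hv (fun y => (hs y).ne') 1

lemma klSum_condProd (hαβ : IsDecomposition α β S) {v : State d α → ℝ} {w : State d β → ℝ}
    {s : State d S → ℝ} (hv : margSub d α S v = s) (hw : margSub d β S w = s) (hs : ∀ y, 0 < s y)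
    {A : State d α → ℝ} {B : State d β → ℝ} {E : State d S → ℝ} (hA : ∀ xa, 0 < A xa)
    (hB : ∀ xb, 0 < B xb) (hE : ∀ y, 0 < E y) :
    klSum (condProd α β S v w s) (condProd α β S A B E)
      = klSum v A + klSum w B - klSum s E := by
  set u := condProd α β S v w s
  have hs' : ∀ y, s y ≠ 0 := fun y => (hs y).ne'
  have hterm : ∀ x, u x * Real.log (u x / condProd α β S A B E x)
      = u x * Real.log (v (restr α x) / A (restr α x))
        + u x * Real.log (w (restr β x) / B (restr β x))
        - u x * Real.log (s (restrSub hαβ.left (restr α x))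
            / E (restrSub hαβ.left (restr α x))) := by
    intro x
    by_cases hu : u x = 0
    · simp [hu]
    have hv0 : v (restr α x) ≠ 0 := fun h => hu (by simp [u, condProd, h])
    have hw0 : w (restr β x) ≠ 0 := fun h => hu (by simp [u, condProd, h])
    have hsplit : u x / condProd α β S A B E x = v (restr α x) / A (restr α x)
        * (w (restr β x) / B (restr β x)) / (s (restr S x) / E (restr S x)) := by
      simp only [u, condProd]
      field_simp [(hA (restr α x)).ne', (hB (restr β x)).ne', (hE (restr S x)).ne', hs']
    have hvA := div_ne_zero hv0 (hA (restr α x)).ne'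
    have hwB := div_ne_zero hw0 (hB (restr β x)).ne'
    rw [hsplit, Real.log_div (mul_ne_zero hvA hwB) (div_ne_zero (hs' _) (hE _).ne'),
      Real.log_mul hvA hwB, restrSub_restr]
    ring
  unfold klSum
  rw [Finset.sum_congr rfl fun x _ => hterm x, Finset.sum_sub_distrib, Finset.sum_add_distrib,
    sum_condProd_mul_left hαβ v hw hs' fun xa => Real.log (v xa / A xa),
    sum_condProd_mul_right hαβ w hv hs' fun xb => Real.log (w xb / B xb),
    sum_condProd_mul_left hαβ v hw hs'
      fun xa => Real.log (s (restrSub hαβ.left xa) / E (restrSub hαβ.left xa)),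
    ← sum_pushfwd_mul (restrSub hαβ.left) v fun y => Real.log (s y / E y),
    ← margSub_eq_pushfwd, hv]

lemma eq_condProd_margF [Nonempty (∀ i, Fin (d i))] (hαβ : IsDecomposition α β S)
    {a : State d α → ℝ} {b : State d β → ℝ} (ha : ∀ xa, 0 < a xa) (hb : ∀ xb, 0 < b xb)
    {q : (∀ i, Fin (d i)) → ℝ} (hq : ∀ x, q x = a (restr α x) * b (restr β x)) :
    q = condProd α β S (margF d α q) (margF d β q) (margF d S q) := by
  have hqα := margF_left_of_eq_mul hαβ hq
  have hqβ := margF_right_of_eq_mul hαβ hq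
  have hqS : ∀ y, margF d S q y = margSub d α S a y * margSub d β S b y := by
    intro y
    rw [← margSub_margF hαβ.left, funext hqα, margSub_eq_pushfwd hαβ.left, pushfwd_mul_comp,
      ← margSub_eq_pushfwd]
  funext x
  have hA := (margSub_pos hαβ.left ha (restr S x)).ne'
  have hB := (margSub_pos hαβ.right hb (restr S x)).ne'
  rw [condProd, hqα, hqβ, hqS, hq, restrSub_restr, restrSub_restr]
  field_simp

def Factorizes (𝓖 : Finset (Finset (Fin m))) (f : (∀ i, Fin (d i)) → ℝ) : Prop :=
  ∃ c > 0, ∃ Θ : (F : Finset (Fin m)) → State d F → ℝ, (∀ F y, 0 < Θ F y) ∧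
    ∀ x, f x = c * ∏ F ∈ 𝓖, Θ F (restr F x)

namespace Factorizes

variable {𝓖 𝓗 : Finset (Finset (Fin m))} {f g : (∀ i, Fin (d i)) → ℝ}

lemma pos (hf : Factorizes 𝓖 f) (x : ∀ i, Fin (d i)) : 0 < f x := by
  obtain ⟨c, hc, Θ, hΘ, hf⟩ := hf
  rw [hf]
  exact mul_pos hc (Finset.prod_pos fun F _ => hΘ F _)

lemma pos_of_comp [Nonempty (∀ i, Fin (d i))] {γ : Finset (Fin m)} {a : State d γ → ℝ}
    (ha : Factorizes 𝓖 (a ∘ restr γ)) (xa : State d γ) : 0 < a xa := by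
  obtain ⟨x, rfl⟩ := restr_surjective γ xa
  exact ha.pos x

lemma mul (hf : Factorizes 𝓖 f) (hg : Factorizes 𝓖 g) : Factorizes 𝓖 (fun x => f x * g x) := by
  obtain ⟨c, hc, Θ, hΘ, hf⟩ := hf
  obtain ⟨c', hc', Θ', hΘ', hg⟩ := hg
  refine ⟨c * c', mul_pos hc hc', fun F y => Θ F y * Θ' F y,
    fun F y => mul_pos (hΘ F y) (hΘ' F y), fun x => ?_⟩
  simp only [hf, hg, Finset.prod_mul_distrib]
  ring

lemma mono (h : 𝓖 ⊆ 𝓗) (hf : Factorizes 𝓖 f) : Factorizes 𝓗 f := by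
  obtain ⟨c, hc, Θ, hΘ, hf⟩ := hf
  refine ⟨c, hc, fun F y => if F ∈ 𝓖 then Θ F y else 1,
    fun F y => by dsimp only; split_ifs <;> simp [hΘ], fun x => ?_⟩
  rw [hf, Finset.prod_ite_mem, Finset.inter_eq_right.2 h]

lemma of_restr {T F : Finset (Fin m)} (hF : F ∈ 𝓖) (hTF : T ⊆ F) {E : State d T → ℝ}
    (hE : ∀ y, 0 < E y) : Factorizes 𝓖 (fun x => E (restr T x)) := by
  refine mono (Finset.singleton_subset_iff.2 hF) ⟨1, one_pos,
    fun F y => if h : T ⊆ F then E (restrSub h y) else 1,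
    fun F y => by dsimp only; split_ifs <;> simp [hE], fun x => ?_⟩
  simp [hTF]

lemma exists_eq_comp_restr {γ : Finset (Fin m)} (h : ∀ F ∈ 𝓖, F ⊆ γ) (hf : Factorizes 𝓖 f) :
    ∃ a : State d γ → ℝ, f = a ∘ restr γ := by
  obtain ⟨c, hc, Θ, hΘ, hf⟩ := hf
  have hfactors : f.FactorsThrough (restr γ) := fun x y hxy => by
    rw [hf, hf]
    congr 1
    refine Finset.prod_congr rfl fun F hF => ?_
    rw [← restrSub_restr (h F hF), hxy, restrSub_restr]
  exact ⟨Function.extend (restr γ) f 0, funext fun x => (hfactors.extend_apply 0 x).symm⟩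

lemma exists_split (hsplit : ∀ F ∈ 𝓖, F ⊆ α ∨ F ⊆ β) (hf : Factorizes 𝓖 f) :
    ∃ (a : State d α → ℝ) (b : State d β → ℝ),
      Factorizes (𝓖.filter (· ⊆ α)) (a ∘ restr α) ∧
      Factorizes (𝓖.filter (· ⊆ β)) (b ∘ restr β) ∧
      ∀ x, f x = a (restr α x) * b (restr β x) := by
  obtain ⟨c, hc, Θ, hΘ, hf⟩ := hf
  set 𝓖α := 𝓖.filter (· ⊆ α)
  set 𝓖' := 𝓖.filter (¬ · ⊆ α)
  have hsubα : ∀ F ∈ 𝓖α, F ⊆ α := fun F hF => (Finset.mem_filter.1 hF).2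
  have hsubβ : ∀ F ∈ 𝓖', F ⊆ β := fun F hF =>
    (hsplit F (Finset.mem_filter.1 hF).1).resolve_left (Finset.mem_filter.1 hF).2
  have hfα : Factorizes 𝓖α fun x => c * ∏ F ∈ 𝓖α, Θ F (restr F x) := ⟨c, hc, Θ, hΘ, fun x => rfl⟩
  have hfβ : Factorizes 𝓖' fun x => ∏ F ∈ 𝓖', Θ F (restr F x) :=
    ⟨1, one_pos, Θ, hΘ, fun x => (one_mul _).symm⟩
  obtain ⟨a, ha⟩ := hfα.exists_eq_comp_restr hsubα
  obtain ⟨b, hb⟩ := hfβ.exists_eq_comp_restr hsubβ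
  refine ⟨a, b, ha ▸ hfα, ?_, fun x => ?_⟩
  · exact hb ▸ hfβ.mono fun F hF => Finset.mem_filter.2 ⟨(Finset.mem_filter.1 hF).1, hsubβ F hF⟩
  · rw [hf, ← Finset.prod_filter_mul_prod_filter_not 𝓖 (· ⊆ α), ← mul_assoc]
    exact congr_arg₂ (· * ·) (congrFun ha x) (congrFun hb x)

lemma margF_comp_restr [Nonempty (∀ i, Fin (d i))] (hαβ : IsDecomposition α β S)
    {F : Finset (Fin m)} (hF : F ∈ 𝓖) (hSF : S ⊆ F) {a : State d α → ℝ} {b : State d β → ℝ}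
    (ha : Factorizes 𝓖 (a ∘ restr α)) (hb : ∀ xb, 0 < b xb) {q : (∀ i, Fin (d i)) → ℝ}
    (hq : ∀ x, q x = a (restr α x) * b (restr β x)) :
    Factorizes 𝓖 (margF d α q ∘ restr α) := by
  convert ha.mul (of_restr hF hSF (margSub_pos hαβ.right hb)) using 1
  funext x
  rw [Function.comp_apply, margF_left_of_eq_mul hαβ hq, restrSub_restr]
  rfl

end Factorizes

lemma exists_factors_of_subtype (𝓖 : Finset (Finset (Fin m)))
    (θ : (F : {F // F ∈ 𝓖}) → State d F.1 → ℝ) (hθ : ∀ F y, 0 < θ F y) :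
    ∃ Θ : (F : Finset (Fin m)) → State d F → ℝ, (∀ F y, 0 < Θ F y) ∧ ∀ F, Θ F.1 = θ F := by
  refine ⟨fun F => if h : F ∈ 𝓖 then θ ⟨F, h⟩ else fun _ => 1, fun F y => ?_,
    fun F => dif_pos F.2⟩
  dsimp only
  split_ifs
  exacts [hθ _ _, one_pos]

lemma mem_hierModel_iff {𝓕 : Finset (Finset (Fin m))} {q : (∀ i, Fin (d i)) → ℝ} :
    q ∈ hierModel d 𝓕 ↔ q ∈ simplex _ ∧ Factorizes 𝓕 q := by
  constructor
  · rintro ⟨hq, θ, hθ, Z, hZ, hrep⟩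
    obtain ⟨Θ, hΘ, hΘθ⟩ := exists_factors_of_subtype 𝓕 θ hθ
    refine ⟨hq, 1 / Z, by positivity, Θ, hΘ, fun x => ?_⟩
    rw [hrep, ← Finset.prod_coe_sort 𝓕]
    simp only [hΘθ]
    rfl
  · rintro ⟨hq, c, hc, Θ, hΘ, hrep⟩
    refine ⟨hq, fun F => Θ F.1, fun F => hΘ F.1, 1 / c, by positivity, fun x => ?_⟩
    rw [hrep, one_div_one_div, ← Finset.prod_coe_sort 𝓕]
    rfl

lemma mem_hierModelSub_iff [Nonempty (∀ i, Fin (d i))] {γ : Finset (Fin m)}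
    {𝓕 : Finset (Finset (Fin m))} {h : ∀ F ∈ 𝓕, F ⊆ γ} {q : State d γ → ℝ} :
    q ∈ hierModelSub d γ 𝓕 h ↔ q ∈ simplex _ ∧ Factorizes 𝓕 (q ∘ restr γ) := by
  constructor
  · rintro ⟨hq, θ, hθ, Z, hZ, hrep⟩
    obtain ⟨Θ, hΘ, hΘθ⟩ := exists_factors_of_subtype 𝓕 θ hθ
    refine ⟨hq, 1 / Z, by positivity, Θ, hΘ, fun x => ?_⟩
    rw [Function.comp_apply, hrep, ← Finset.prod_coe_sort 𝓕]
    simp only [hΘθ]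
    rfl
  · rintro ⟨hq, c, hc, Θ, hΘ, hrep⟩
    refine ⟨hq, fun F => Θ F.1, fun F => hΘ F.1, 1 / c, by positivity, fun xa => ?_⟩
    obtain ⟨x, rfl⟩ := restr_surjective γ xa
    rw [← Function.comp_apply (f := q), hrep, one_div_one_div, ← Finset.prod_coe_sort 𝓕]
    rfl

lemma pos_of_mem_hierModel {𝓕 : Finset (Finset (Fin m))} {q : (∀ i, Fin (d i)) → ℝ}
    (hq : q ∈ hierModel d 𝓕) : ∀ x, 0 < q x :=
  (mem_hierModel_iff.1 hq).2.pos

lemma pos_of_mem_hierModelSub [Nonempty (∀ i, Fin (d i))] {γ : Finset (Fin m)}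
    {𝓕 : Finset (Finset (Fin m))} {h : ∀ F ∈ 𝓕, F ⊆ γ} {q : State d γ → ℝ}
    (hq : q ∈ hierModelSub d γ 𝓕 h) : ∀ xa, 0 < q xa :=
  (mem_hierModelSub_iff.1 hq).2.pos_of_comp

lemma exists_mem_hierModel_klSum_le [Nonempty (∀ i, Fin (d i))] (hαβ : IsDecomposition α β S)
    {𝓕 : Finset (Finset (Fin m))} {F₁ : Finset (Fin m)} (hF₁ : F₁ ∈ 𝓕) (hSF₁ : S ⊆ F₁)
    {v : State d α → ℝ} {w : State d β → ℝ} {s : State d S → ℝ}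
    (hv : margSub d α S v = s) (hw : margSub d β S w = s) (hs : ∀ y, 0 < s y)
    (hv₁ : ∑ xa, v xa = 1) {hα : ∀ F ∈ 𝓕.filter (· ⊆ α), F ⊆ α}
    {hβ : ∀ F ∈ 𝓕.filter (· ⊆ β), F ⊆ β} {qa : State d α → ℝ}
    (hqa : qa ∈ hierModelSub d α (𝓕.filter (· ⊆ α)) hα) {qb : State d β → ℝ}
    (hqb : qb ∈ hierModelSub d β (𝓕.filter (· ⊆ β)) hβ) :
    ∃ Q ∈ hierModel d 𝓕, klSum (condProd α β S v w s) Q ≤ klSum v qa + klSum w qb := by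
  obtain ⟨hqa₁, hqaF⟩ := mem_hierModelSub_iff.1 hqa
  obtain ⟨hqb₁, hqbF⟩ := mem_hierModelSub_iff.1 hqb
  have hqaS : ∀ y, 0 < margSub d α S qa y := margSub_pos hαβ.left hqaF.pos_of_comp
  have hQF : Factorizes 𝓕 (condProd α β S qa qb (margSub d α S qa)) := by
    convert ((hqaF.mono (Finset.filter_subset _ _)).mul (hqbF.mono (Finset.filter_subset _ _))).mul
      (Factorizes.of_restr hF₁ hSF₁ fun y => inv_pos.2 (hqaS y)) using 1
    funext x
    exact div_eq_mul_inv _ _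
  refine ⟨_, mem_hierModel_iff.2 ⟨condProd_mem_simplex hαβ rfl
    (fun xa => (hqaF.pos_of_comp xa).le) hqb₁ hqaS, hQF⟩, ?_⟩
  have hgibbs : 0 ≤ klSum s (margSub d α S qa) := klSum_nonneg (fun y => (hs y).le) hqaS
    (by rw [← hv, sum_margSub hαβ.left, sum_margSub hαβ.left, hv₁, hqa₁.2])
  rw [klSum_condProd hαβ hv hw hs hqaF.pos_of_comp hqbF.pos_of_comp hqaS]
  linarith

lemma exists_klSum_eq_add [Nonempty (∀ i, Fin (d i))] (hαβ : IsDecomposition α β S)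
    {𝓕 : Finset (Finset (Fin m))} (hsplit : ∀ F ∈ 𝓕, F ⊆ α ∨ F ⊆ β) {F₁ F₂ : Finset (Fin m)}
    (hF₁ : F₁ ∈ 𝓕.filter (· ⊆ α)) (hSF₁ : S ⊆ F₁) (hF₂ : F₂ ∈ 𝓕.filter (· ⊆ β))
    (hSF₂ : S ⊆ F₂) {v : State d α → ℝ} {w : State d β → ℝ} {s : State d S → ℝ}
    (hv : margSub d α S v = s) (hw : margSub d β S w = s) (hs : ∀ y, 0 < s y)
    (hs₁ : ∑ y, s y = 1) {hα : ∀ F ∈ 𝓕.filter (· ⊆ α), F ⊆ α}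
    {hβ : ∀ F ∈ 𝓕.filter (· ⊆ β), F ⊆ β} {q : (∀ i, Fin (d i)) → ℝ}
    (hq : q ∈ hierModel d 𝓕) :
    ∃ A ∈ hierModelSub d α (𝓕.filter (· ⊆ α)) hα, ∃ B ∈ hierModelSub d β (𝓕.filter (· ⊆ β)) hβ,
      klSum (condProd α β S v w s) q = klSum v A + klSum w B := by
  obtain ⟨hq₁, hqF⟩ := mem_hierModel_iff.1 hq
  obtain ⟨a, b, ha, hb, hqab⟩ := hqF.exists_split hsplit
  have hqS : ∀ y, 0 < margF d S q y := margF_pos hqF.pos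
  -- `A` is the `α`-marginal of `q` reweighted to have `S`-marginal `s`.
  set A : State d α → ℝ := fun xa =>
    margF d α q xa * (s (restrSub hαβ.left xa) / margF d S q (restrSub hαβ.left xa))
  have hA : A ∈ hierModelSub d α (𝓕.filter (· ⊆ α)) hα := by
    refine mem_hierModelSub_iff.2 ⟨⟨fun xa => (mul_pos (margF_pos hqF.pos xa)
      (div_pos (hs _) (hqS _))).le, ?_⟩, ?_⟩
    · rw [← sum_pushfwd_mul (restrSub hαβ.left) (margF d α q) fun y => s y / margF d S q y,
        ← margSub_eq_pushfwd, margSub_margF hαβ.left, ← hs₁]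
      exact Finset.sum_congr rfl fun y _ => mul_div_cancel₀ _ (hqS y).ne'
    · exact (ha.margF_comp_restr hαβ hF₁ hSF₁ hb.pos_of_comp hqab).mul
        (Factorizes.of_restr hF₁ hSF₁ fun y => div_pos (hs y) (hqS y))
  have hB : margF d β q ∈ hierModelSub d β (𝓕.filter (· ⊆ β)) hβ := by
    refine mem_hierModelSub_iff.2 ⟨⟨fun xb => (margF_pos hqF.pos xb).le,
      by rw [sum_margF, hq₁.2]⟩, ?_⟩
    exact hb.margF_comp_restr hαβ.symm hF₂ hSF₂ ha.pos_of_comp fun x =>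
      (hqab x).trans (mul_comm _ _)
  have hqA : q = condProd α β S A (margF d β q) s := by
    conv_lhs => rw [eq_condProd_margF hαβ ha.pos_of_comp hb.pos_of_comp hqab]
    funext x
    have := (hs (restr S x)).ne'
    have := (hqS (restr S x)).ne'
    simp only [condProd, A, restrSub_restr]
    field_simp
  refine ⟨A, hA, _, hB, ?_⟩
  have hss : klSum s s = 0 := by simp [klSum, div_self (hs _).ne']
  conv_lhs => rw [hqA]
  rw [klSum_condProd hαβ hv hw hs (pos_of_mem_hierModelSub hA)
    (pos_of_mem_hierModelSub hB) hs, hss, sub_zero]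

theorem divFrom_hierModel_condProd [Nonempty (∀ i, Fin (d i))] (hαβ : IsDecomposition α β S)
    {𝓕 : Finset (Finset (Fin m))} (hsplit : ∀ F ∈ 𝓕, F ⊆ α ∨ F ⊆ β) {F₁ F₂ : Finset (Fin m)}
    (hF₁ : F₁ ∈ 𝓕.filter (· ⊆ α)) (hSF₁ : S ⊆ F₁) (hF₂ : F₂ ∈ 𝓕.filter (· ⊆ β))
    (hSF₂ : S ⊆ F₂) {v : State d α → ℝ} {w : State d β → ℝ} {s : State d S → ℝ}
    (hv : margSub d α S v = s) (hw : margSub d β S w = s) (hs : ∀ y, 0 < s y)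
    (hv₁ : v ∈ simplex _) (hw₁ : w ∈ simplex _) {hα : ∀ F ∈ 𝓕.filter (· ⊆ α), F ⊆ α}
    {hβ : ∀ F ∈ 𝓕.filter (· ⊆ β), F ⊆ β} :
    divFrom (hierModel d 𝓕) (condProd α β S v w s) =
      divFrom (hierModelSub d α (𝓕.filter (· ⊆ α)) hα) v +
      divFrom (hierModelSub d β (𝓕.filter (· ⊆ β)) hβ) w := by
  have hs₁ : ∑ y, s y = 1 := by rw [← hv, sum_margSub hαβ.left, hv₁.2]
  rw [divFrom_eq_biInf_klSum fun q => pos_of_mem_hierModel,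
    divFrom_eq_biInf_klSum fun q => pos_of_mem_hierModelSub,
    divFrom_eq_biInf_klSum fun q => pos_of_mem_hierModelSub]
  refine le_antisymm (EReal.le_biInf_add_biInf
    (biInf_klSum_ne_bot hv₁ (fun q hq => hq.1) fun q => pos_of_mem_hierModelSub)
    (biInf_klSum_ne_bot hw₁ (fun q hq => hq.1) fun q => pos_of_mem_hierModelSub)
    fun qa hqa qb hqb => ?_) (le_iInf₂ fun q hq => ?_)
  · obtain ⟨Q, hQ, hle⟩ := exists_mem_hierModel_klSum_le hαβ
      (Finset.mem_filter.1 hF₁).1 hSF₁ hv hw hs hv₁.2 hqa hqb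
    exact (iInf₂_le Q hQ).trans (by exact_mod_cast hle)
  · obtain ⟨A, hA, B, hB, heq⟩ := exists_klSum_eq_add hαβ hsplit hF₁ hSF₁ hF₂ hSF₂
      hv hw hs hs₁ hq (hα := hα) (hβ := hβ)
    rw [heq, EReal.coe_add]
    exact add_le_add (iInf₂_le A hA) (iInf₂_le B hB)

end HierarchicalModel

open HierarchicalModel in
theorem stmt13_general {m : ℕ} (d : Fin m → ℕ) (𝓕 : Finset (Finset (Fin m)))
    (α β : Finset (Fin m)) (hunion : α ∪ β = Finset.univ)
    (hsplit : ∀ F ∈ 𝓕, F ⊆ α ∨ F ⊆ β)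
    (hS1 : ∃ F ∈ 𝓕, α ∩ β ⊆ F ∧ F ⊆ α)
    (hS2 : ∃ F ∈ 𝓕, α ∩ β ⊆ F ∧ F ⊆ β)
    (p : (∀ i, Fin (d i)) → ℝ) (hp : p ∈ simplex (∀ i, Fin (d i)))
    (hpS : ∀ y, 0 < margF d (α ∩ β) p y)
    (v : ((i : {j // j ∈ α}) → Fin (d i.1)) → ℝ)
    (hv : v ∈ simplex ((i : {j // j ∈ α}) → Fin (d i.1)) ∧
      ∀ F ∈ 𝓕, F ⊆ α → margSub d α F v = margSub d α F (margF d α p))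
    (w : ((i : {j // j ∈ β}) → Fin (d i.1)) → ℝ)
    (hw : w ∈ simplex ((i : {j // j ∈ β}) → Fin (d i.1)) ∧
      ∀ F ∈ 𝓕, F ⊆ β → margSub d β F w = margSub d β F (margF d β p))
    (u : (∀ i, Fin (d i)) → ℝ)
    (hu : ∀ x, u x = v (fun i => x i.1) * w (fun i => x i.1) /
      margF d (α ∩ β) p (fun i => x i.1)) :
    u ∈ simplex (∀ i, Fin (d i)) ∧
    divFrom (closure (hierModel d 𝓕)) u =
      divFrom (closure (hierModelSub d α (𝓕.filter (· ⊆ α))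
        (fun F hF => (Finset.mem_filter.mp hF).2))) v +
      divFrom (closure (hierModelSub d β (𝓕.filter (· ⊆ β))
        (fun F hF => (Finset.mem_filter.mp hF).2))) w := by
  obtain ⟨F₁, hF₁, hSF₁, hF₁α⟩ := hS1
  obtain ⟨F₂, hF₂, hSF₂, hF₂β⟩ := hS2
  have : Nonempty (∀ i, Fin (d i)) := nonempty_of_mem_simplex hp
  have hαβ : IsDecomposition α β (α ∩ β) :=
    ⟨hunion, Finset.inter_subset_left, Finset.inter_subset_right, subset_rfl⟩
  have hvS : margSub d α (α ∩ β) v = margF d (α ∩ β) p := by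
    rw [margSub_eq_of_margSub_eq hSF₁ hF₁α (hv.2 F₁ hF₁ hF₁α), margSub_margF hαβ.left]
  have hwS : margSub d β (α ∩ β) w = margF d (α ∩ β) p := by
    rw [margSub_eq_of_margSub_eq hSF₂ hF₂β (hw.2 F₂ hF₂ hF₂β), margSub_margF hαβ.right]
  obtain rfl : u = condProd α β (α ∩ β) v w (margF d (α ∩ β) p) := funext hu
  simp only [divFrom_closure]
  exact ⟨condProd_mem_simplex hαβ hvS hv.1.1 hw.1 hpS,
    divFrom_hierModel_condProd hαβ hsplit (Finset.mem_filter.2 ⟨hF₁, hF₁α⟩) hSF₁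
      (Finset.mem_filter.2 ⟨hF₂, hF₂β⟩) hSF₂ hvS hwS hpS hv.1 hw.1⟩

/-- for a reducible decomposition `(α, S, β)` of `𝓕`, `p ∈ Δ_R` with strictly
positive `S`-marginal, `v ∈ Q^α_{p_α}` and `w ∈ Q^β_{p_β}`, the point
`u_x = v(x_α)·w(x_β)/p_S(x_S)` lies in `Δ_R` and its divergence from `M_𝓕` equals the sum of
the divergences of `v` from `M_{𝓕_α}` and of `w` from `M_{𝓕_β}`. -/
theorem stmt13 {m : ℕ} (d : Fin m → ℕ) (𝓕 : Finset (Finset (Fin m)))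
    (hcov : ∀ i : Fin m, ∃ F ∈ 𝓕, i ∈ F)
    (α β : Finset (Fin m)) (hunion : α ∪ β = Finset.univ)
    (hsplit : ∀ F ∈ 𝓕, F ⊆ α ∨ F ⊆ β)
    (hS1 : ∃ F ∈ 𝓕, α ∩ β ⊆ F ∧ F ⊆ α)
    (hS2 : ∃ F ∈ 𝓕, α ∩ β ⊆ F ∧ F ⊆ β)
    (p : (∀ i, Fin (d i)) → ℝ) (hp : p ∈ simplex (∀ i, Fin (d i)))
    (hpS : ∀ y, 0 < margF d (α ∩ β) p y)
    (v : ((i : {j // j ∈ α}) → Fin (d i.1)) → ℝ)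
    (hv : v ∈ simplex ((i : {j // j ∈ α}) → Fin (d i.1)) ∧
      ∀ F ∈ 𝓕, F ⊆ α → margSub d α F v = margSub d α F (margF d α p))
    (w : ((i : {j // j ∈ β}) → Fin (d i.1)) → ℝ)
    (hw : w ∈ simplex ((i : {j // j ∈ β}) → Fin (d i.1)) ∧
      ∀ F ∈ 𝓕, F ⊆ β → margSub d β F w = margSub d β F (margF d β p))
    (u : (∀ i, Fin (d i)) → ℝ)
    (hu : ∀ x, u x = v (fun i => x i.1) * w (fun i => x i.1) /
      margF d (α ∩ β) p (fun i => x i.1)) :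
    u ∈ simplex (∀ i, Fin (d i)) ∧
    divFrom (closure (hierModel d 𝓕)) u =
      divFrom (closure (hierModelSub d α (𝓕.filter (· ⊆ α))
        (fun F hF => (Finset.mem_filter.mp hF).2))) v +
      divFrom (closure (hierModelSub d β (𝓕.filter (· ⊆ β))
        (fun F hF => (Finset.mem_filter.mp hF).2))) w :=
  stmt13_general d 𝓕 α β hunion hsplit hS1 hS2 p hp hpS v hv w hw u hu
end

section
/- Let d_1, d_2, d_3 ≥ 1, let R = [d_1]×[d_2]×[d_3], and let M = {p ∈ Δ_R : there exist strictly positive functions a : [d_1]×[d_2] → ℝ_{>0} and b : [d_2]×[d_3] → ℝ_{>0} with p_{ijk} = a(i,j)·b(j,k) for all (i,j,k)} be the conditional independence model X_1 ⫫ X_3 | X_2 (the hierarchical model of the simplicial complex [12][23]). Then sup_{p∈Δ_R} inf_{q ∈ closure(M)} D(p‖q) = min(log d_1, log d_3). -/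
open scoped BigOperators Pointwise

attribute [local instance] Classical.propDecidable

/-!
Upper bound: for every `p`, the product of the uniform distribution on `[d₁]` with the
`(X₂, X₃)`-marginal of `p` lies in the closure of the model (perturb both factors to be positive),
and it is at least `p / d₁` pointwise, so `D(p‖·) ≤ log d₁` there; symmetrically for `d₃`.

Lower bound: with `n = min d₁ d₃`, let `p` be uniform on the diagonal `{(i, j₀, i) : i < n}`.
For `q = a ⊗ b` in the model, AM-GM gives
`∏ᵢ q(i, j₀, i) = ∏ᵢ a(i, j₀) · ∏ᵢ b(j₀, i) ≤ ((∑ᵢ a(i, j₀)) (∑ₖ b(j₀, k)) / n²)ⁿ ≤ n^(-2n)`,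
since the product of the two sums is part of the total mass of `q`. This closed condition passes
to the closure of the model, and it forces `D(p‖q) = -log n - (1/n) ∑ᵢ log q(i, j₀, i) ≥ log n`.
-/

open Finset Function Filter Topology

def condIndepModel (α β γ : Type*) [Fintype α] [Fintype β] [Fintype γ] :
    Set (α × β × γ → ℝ) :=
  {p | p ∈ simplex (α × β × γ) ∧
    ∃ (a : α × β → ℝ) (b : β × γ → ℝ), (∀ ij, 0 < a ij) ∧ (∀ jk, 0 < b jk) ∧
      ∀ x : α × β × γ, p x = a (x.1, x.2.1) * b (x.2.1, x.2.2)}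

theorem isClosed_simplex (X : Type*) [Fintype X] : IsClosed (simplex X) := by
  simp only [simplex, Set.ofPred_and, Set.ofPred_forall]
  exact (isClosed_iInter fun x => isClosed_le continuous_const (continuous_apply x)).inter
    (isClosed_eq (by fun_prop) continuous_const)

theorem sum_comp_le_sum_of_injective {ι X : Type*} [Fintype ι] [Fintype X] {e : ι → X}
    (he : Injective e) {q : X → ℝ} (hq : ∀ x, 0 ≤ q x) : ∑ i, q (e i) ≤ ∑ x, q x :=
  (sum_map univ ⟨e, he⟩ q).symm.trans_le (sum_le_univ_sum_of_nonneg hq)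

theorem prod_le_mean_pow {ι : Type*} [Fintype ι] [Nonempty ι] {z : ι → ℝ}
    (hz : ∀ i, 0 ≤ z i) : ∏ i, z i ≤ ((∑ i, z i) / Fintype.card ι) ^ Fintype.card ι := by
  have hn : (Fintype.card ι : ℝ) ≠ 0 := by positivity
  have amgm := Real.geom_mean_le_arith_mean_weighted univ (fun _ => (Fintype.card ι : ℝ)⁻¹) z
    (fun _ _ => by positivity) (by simp [hn]) (fun i _ => hz i)
  calc ∏ i, z i = (∏ i, z i ^ (Fintype.card ι : ℝ)⁻¹) ^ Fintype.card ι := by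
        rw [← prod_pow]
        exact prod_congr rfl fun i _ => (Real.rpow_inv_natCast_pow (hz i) Fintype.card_ne_zero).symm
    _ ≤ (∑ i, (Fintype.card ι : ℝ)⁻¹ * z i) ^ Fintype.card ι := by
        gcongr
        exact prod_nonneg fun i _ => Real.rpow_nonneg (hz i) _
    _ = _ := by rw [← mul_sum, inv_mul_eq_div]

theorem KL_le_log_of_le_mul {X : Type*} [Fintype X] {p q : X → ℝ} {c : ℝ}
    (hp : p ∈ simplex X) (hq : ∀ x, 0 ≤ q x) (hpq : ∀ x, p x ≤ c * q x) :
    KL p q ≤ (Real.log c : EReal) := by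
  have hsupp : ∀ x, q x = 0 → p x = 0 := fun x hx =>
    le_antisymm (by simpa [hx] using hpq x) (hp.1 x)
  rw [KL, if_pos hsupp, EReal.coe_le_coe_iff]
  calc ∑ x, p x * Real.log (p x / q x) ≤ ∑ x, p x * Real.log c := by
        refine sum_le_sum fun x _ => ?_
        rcases (hp.1 x).eq_or_lt with h | h
        · simp [← h]
        have hqx : 0 < q x := (hq x).lt_of_ne fun h' => h.ne' (hsupp x h'.symm)
        gcongr
        rw [div_le_iff₀ hqx]
        exact hpq x
    _ = Real.log c := by rw [← sum_mul, hp.2, one_mul]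

namespace condIndepModel

variable {α β γ : Type*} [Fintype α] [Fintype β] [Fintype γ]

theorem subset_simplex : condIndepModel α β γ ⊆ simplex (α × β × γ) := fun _ hp => hp.1

theorem mem_closure_of_nonneg {a : α × β → ℝ} {b : β × γ → ℝ}
    (ha : ∀ ij, 0 ≤ a ij) (hb : ∀ jk, 0 ≤ b jk)
    (hsum : ∑ x : α × β × γ, a (x.1, x.2.1) * b (x.2.1, x.2.2) = 1) :
    (fun x : α × β × γ => a (x.1, x.2.1) * b (x.2.1, x.2.2)) ∈ closure (condIndepModel α β γ) := by
  set Z : ℝ → ℝ := fun ε => ∑ x : α × β × γ, (a (x.1, x.2.1) + ε) * (b (x.2.1, x.2.2) + ε)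
  set F : ℝ → α × β × γ → ℝ := fun ε x => (a (x.1, x.2.1) + ε) * (b (x.2.1, x.2.2) + ε) / Z ε
  have hZ : ∀ ε, 0 ≤ ε → 1 ≤ Z ε := fun ε hε => hsum ▸ sum_le_sum fun x _ =>
    mul_le_mul (le_add_of_nonneg_right hε) (le_add_of_nonneg_right hε) (hb _) (add_nonneg (ha _) hε)
  have hF : ContinuousAt F 0 := by
    have hZ0 : Z 0 ≠ 0 := (zero_lt_one.trans_le (hZ 0 le_rfl)).ne'
    refine continuousAt_pi.2 fun x => ContinuousAt.div (by fun_prop) ?_ hZ0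
    fun_prop
  have hF0 : F 0 = fun x => a (x.1, x.2.1) * b (x.2.1, x.2.2) := by
    funext x; simp [F, Z, hsum]
  have hmem : ∀ ε > 0, F ε ∈ condIndepModel α β γ := by
    intro ε hε
    have hZε : 0 < Z ε := zero_lt_one.trans_le (hZ ε hε.le)
    refine ⟨⟨fun x => ?_, ?_⟩, fun ij => (a ij + ε) / Z ε, fun jk => b jk + ε,
      fun ij => div_pos (add_pos_of_nonneg_of_pos (ha ij) hε) hZε,
      fun jk => add_pos_of_nonneg_of_pos (hb jk) hε, fun x => (div_mul_eq_mul_div _ _ _).symm⟩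
    · have := ha (x.1, x.2.1); have := hb (x.2.1, x.2.2)
      positivity
    · rw [← sum_div]; exact div_self hZε.ne'
  rw [← hF0]
  exact mem_closure_of_tendsto (hF.tendsto.mono_left nhdsWithin_le_nhds)
    (eventually_nhdsWithin_of_forall (s := Set.Ioi 0) hmem)

theorem divFrom_closure_le_log_of_le_mul {p : α × β × γ → ℝ} (hp : p ∈ simplex (α × β × γ))
    {a : α × β → ℝ} {b : β × γ → ℝ} (ha : ∀ ij, 0 ≤ a ij) (hb : ∀ jk, 0 ≤ b jk)
    (hsum : ∑ x : α × β × γ, a (x.1, x.2.1) * b (x.2.1, x.2.2) = 1) {c : ℝ}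
    (hpc : ∀ x, p x ≤ c * (a (x.1, x.2.1) * b (x.2.1, x.2.2))) :
    divFrom (closure (condIndepModel α β γ)) p ≤ (Real.log c : EReal) :=
  (iInf₂_le _ (mem_closure_of_nonneg ha hb hsum)).trans
    (KL_le_log_of_le_mul hp (fun _ => mul_nonneg (ha _) (hb _)) hpc)

theorem divFrom_closure_le_log_card_left [Nonempty α] {p : α × β × γ → ℝ}
    (hp : p ∈ simplex (α × β × γ)) :
    divFrom (closure (condIndepModel α β γ)) p ≤ (Real.log (Fintype.card α) : EReal) := by
  have hn : (Fintype.card α : ℝ) ≠ 0 := by positivity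
  refine divFrom_closure_le_log_of_le_mul hp (a := fun _ => (Fintype.card α : ℝ)⁻¹)
    (b := fun jk => ∑ i, p (i, jk)) (fun _ => by positivity)
    (fun _ => sum_nonneg fun _ _ => hp.1 _) ?_ fun x => ?_
  · rw [Fintype.sum_prod_type]
    dsimp only
    rw [sum_const, card_univ, nsmul_eq_mul, ← mul_sum, ← mul_assoc, mul_inv_cancel₀ hn, one_mul,
      sum_comm, ← hp.2, Fintype.sum_prod_type]
  · rw [← mul_assoc, mul_inv_cancel₀ hn, one_mul]
    exact single_le_sum (f := fun i => p (i, x.2)) (fun _ _ => hp.1 _) (mem_univ x.1)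

theorem divFrom_closure_le_log_card_right [Nonempty γ] {p : α × β × γ → ℝ}
    (hp : p ∈ simplex (α × β × γ)) :
    divFrom (closure (condIndepModel α β γ)) p ≤ (Real.log (Fintype.card γ) : EReal) := by
  have hn : (Fintype.card γ : ℝ) ≠ 0 := by positivity
  refine divFrom_closure_le_log_of_le_mul hp (a := fun ij => ∑ k, p (ij.1, ij.2, k))
    (b := fun _ => (Fintype.card γ : ℝ)⁻¹) (fun _ => sum_nonneg fun _ _ => hp.1 _)
    (fun _ => by positivity) ?_ fun x => ?_
  · rw [← hp.2]
    simp only [Fintype.sum_prod_type, sum_const, card_univ, nsmul_eq_mul]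
    refine sum_congr rfl fun i _ => sum_congr rfl fun j _ => ?_
    field_simp
  · rw [mul_comm, mul_assoc, inv_mul_cancel₀ hn, mul_one]
    exact single_le_sum (f := fun k => p (x.1, x.2.1, k)) (fun _ _ => hp.1 _) (mem_univ x.2.2)

end condIndepModel

section uniformOnRange

variable {ι X : Type*} [Fintype ι] {e : ι → X}

noncomputable def uniformOnRange (e : ι → X) : X → ℝ :=
  fun x => if x ∈ Set.range e then (Fintype.card ι : ℝ)⁻¹ else 0

theorem uniformOnRange_apply_self (e : ι → X) (i : ι) :
    uniformOnRange e (e i) = (Fintype.card ι : ℝ)⁻¹ := by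
  simp [uniformOnRange]

theorem uniformOnRange_eq_zero {x : X} (hx : x ∉ Set.range e) : uniformOnRange e x = 0 := by
  simp [uniformOnRange, hx]

theorem uniformOnRange_mem_simplex [Fintype X] [Nonempty ι] (he : Injective e) :
    uniformOnRange e ∈ simplex X := by
  refine ⟨fun x => ?_, ?_⟩
  · unfold uniformOnRange; split_ifs <;> positivity
  · rw [← Fintype.sum_of_injective e he (fun _ => (Fintype.card ι : ℝ)⁻¹) _
      (fun _ => uniformOnRange_eq_zero) (fun i => (uniformOnRange_apply_self e i).symm)]
    simp

theorem log_card_le_KL_uniformOnRange [Fintype X] [Nonempty ι] (he : Injective e) {q : X → ℝ}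
    (hq : ∀ x, 0 ≤ q x)
    (hprod : ∏ i, q (e i) ≤ ((Fintype.card ι : ℝ) ^ 2)⁻¹ ^ Fintype.card ι) :
    (Real.log (Fintype.card ι) : EReal) ≤ KL (uniformOnRange e) q := by
  set n : ℝ := (Fintype.card ι : ℝ) with hn_def
  have hn : 0 < n := by positivity
  by_cases hsupp : ∀ x, q x = 0 → uniformOnRange e x = 0
  swap
  · simp [KL, hsupp]
  have hqpos : ∀ i, 0 < q (e i) := fun i => (hq _).lt_of_ne fun h => by
    simpa [uniformOnRange_apply_self, hn.ne'] using hsupp _ h.symm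
  have hlog : ∑ i, Real.log (q (e i)) ≤ n * Real.log (n ^ 2)⁻¹ := by
    rw [← Real.log_prod fun i _ => (hqpos i).ne', ← Real.log_pow]
    exact Real.log_le_log (prod_pos fun i _ => hqpos i) hprod
  rw [KL, if_pos hsupp, EReal.coe_le_coe_iff, ← Fintype.sum_of_injective e he
    (fun i => n⁻¹ * Real.log (n⁻¹ / q (e i))) _
    (fun x hx => by rw [uniformOnRange_eq_zero hx, zero_mul])
    (fun i => by rw [uniformOnRange_apply_self])]
  calc Real.log n = n⁻¹ * (n * Real.log n⁻¹ - n * Real.log (n ^ 2)⁻¹) := by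
        rw [Real.log_inv, Real.log_inv, Real.log_pow]
        field_simp
        ring
    _ ≤ n⁻¹ * (n * Real.log n⁻¹ - ∑ i, Real.log (q (e i))) := by gcongr
    _ = ∑ i, n⁻¹ * Real.log (n⁻¹ / q (e i)) := by
        simp_rw [← mul_sum, Real.log_div (inv_ne_zero hn.ne') (hqpos _).ne', sum_sub_distrib,
          sum_const, card_univ, nsmul_eq_mul, ← hn_def]

end uniformOnRange

namespace condIndepModel

variable {α β γ ι : Type*} [Fintype α] [Fintype β] [Fintype γ] [Fintype ι] [Nonempty ι]
  {f : ι → α} {g : ι → γ}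

theorem prod_diag_le (hf : Injective f) (hg : Injective g) (j : β) {q : α × β × γ → ℝ}
    (hq : q ∈ condIndepModel α β γ) :
    ∏ i, q (f i, j, g i) ≤ ((Fintype.card ι : ℝ) ^ 2)⁻¹ ^ Fintype.card ι := by
  obtain ⟨⟨hq0, hq1⟩, a, b, ha, hb, hab⟩ := hq
  set n : ℝ := (Fintype.card ι : ℝ)
  set A := ∑ i, a (f i, j)
  set B := ∑ k, b (j, g k)
  have hA : 0 ≤ A := sum_nonneg fun _ _ => (ha _).le
  have hB : 0 ≤ B := sum_nonneg fun _ _ => (hb _).le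
  have hAB : A * B ≤ 1 := by
    have hinj : Injective fun ik : ι × ι => (f ik.1, j, g ik.2) := fun ik ik' h => by
      simp only [Prod.mk.injEq] at h
      exact Prod.ext (hf h.1) (hg h.2.2)
    calc A * B = ∑ ik : ι × ι, q (f ik.1, j, g ik.2) := by
          simp only [A, B, sum_mul_sum, hab, Fintype.sum_prod_type]
      _ ≤ ∑ x, q x := sum_comp_le_sum_of_injective hinj hq0
      _ = 1 := hq1
  calc ∏ i, q (f i, j, g i) = (∏ i, a (f i, j)) * ∏ i, b (j, g i) := by
        simp only [hab, prod_mul_distrib]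
    _ ≤ (A / n) ^ Fintype.card ι * (B / n) ^ Fintype.card ι :=
        mul_le_mul (prod_le_mean_pow fun _ => (ha _).le) (prod_le_mean_pow fun _ => (hb _).le)
          (prod_nonneg fun _ _ => (hb _).le) (by positivity)
    _ = (A * B * (n ^ 2)⁻¹) ^ Fintype.card ι := by rw [← mul_pow]; ring
    _ ≤ ((n ^ 2)⁻¹) ^ Fintype.card ι := by
        gcongr
        exact mul_le_of_le_one_left (by positivity) hAB

theorem closure_subset_prod_diag_le (hf : Injective f) (hg : Injective g) (j : β) :
    closure (condIndepModel α β γ) ⊆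
      {q | ∏ i, q (f i, j, g i) ≤ ((Fintype.card ι : ℝ) ^ 2)⁻¹ ^ Fintype.card ι} :=
  closure_minimal (fun _ => prod_diag_le hf hg j) (isClosed_le (by fun_prop) continuous_const)

theorem log_card_le_iSup_divFrom_closure (hf : Injective f) (hg : Injective g) (j : β) :
    (Real.log (Fintype.card ι) : EReal) ≤
      ⨆ p ∈ simplex (α × β × γ), divFrom (closure (condIndepModel α β γ)) p := by
  have he : Injective fun i => (f i, j, g i) := fun i i' h => hf (congrArg Prod.fst h)
  refine le_iSup₂_of_le _ (uniformOnRange_mem_simplex he) (le_iInf₂ fun q hq => ?_)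
  have hq_simplex := closure_minimal subset_simplex (isClosed_simplex _) hq
  exact log_card_le_KL_uniformOnRange he hq_simplex.1 (closure_subset_prod_diag_le hf hg j hq)

end condIndepModel

/-- the maximum divergence from the conditional independence model
`X₁ ⫫ X₃ | X₂` (the hierarchical model of `[12][23]`) equals `min(log d₁, log d₃)`. -/
theorem stmt17 (d₁ d₂ d₃ : ℕ) (h₁ : 1 ≤ d₁) (h₂ : 1 ≤ d₂) (h₃ : 1 ≤ d₃)
    (M : Set ((Fin d₁ × Fin d₂ × Fin d₃) → ℝ))
    (hM : M = {p | p ∈ simplex (Fin d₁ × Fin d₂ × Fin d₃) ∧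
        ∃ (a : Fin d₁ × Fin d₂ → ℝ) (b : Fin d₂ × Fin d₃ → ℝ),
          (∀ ij, 0 < a ij) ∧ (∀ jk, 0 < b jk) ∧
          ∀ x : Fin d₁ × Fin d₂ × Fin d₃, p x = a (x.1, x.2.1) * b (x.2.1, x.2.2)}) :
    (⨆ p ∈ simplex (Fin d₁ × Fin d₂ × Fin d₃), divFrom (closure M) p)
      = ((min (Real.log (d₁ : ℝ)) (Real.log (d₃ : ℝ)) : ℝ) : EReal) := by
  change M = condIndepModel _ _ _ at hM
  subst hM
  have : Nonempty (Fin d₁) := ⟨⟨0, h₁⟩⟩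
  have : Nonempty (Fin d₃) := ⟨⟨0, h₃⟩⟩
  have : Nonempty (Fin (min d₁ d₃)) := ⟨⟨0, lt_min h₁ h₃⟩⟩
  have hlog_min : Real.log (min (d₁ : ℝ) d₃) = min (Real.log d₁) (Real.log d₃) := by
    rcases le_total (d₁ : ℝ) d₃ with h | h
    · rw [min_eq_left h, min_eq_left (Real.log_le_log (by exact_mod_cast h₁) h)]
    · rw [min_eq_right h, min_eq_right (Real.log_le_log (by exact_mod_cast h₃) h)]
  refine le_antisymm (iSup₂_le fun p hp => ?_) ?_
  · rw [EReal.coe_strictMono.monotone.map_min]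
    exact le_min (by simpa using condIndepModel.divFrom_closure_le_log_card_left hp)
      (by simpa using condIndepModel.divFrom_closure_le_log_card_right hp)
  · rw [← hlog_min]
    simpa using condIndepModel.log_card_le_iSup_divFrom_closure
      (Fin.castLE_injective (min_le_left d₁ d₃)) (Fin.castLE_injective (min_le_right d₁ d₃))
      (⟨0, h₂⟩ : Fin d₂)
end

section
/- Let a, b ≥ 1 and d ≥ 0 be integers. Let I = {(r,j) ∈ ℕ² : 0 ≤ j ≤ b, 0 ≤ r ≤ a + d·(b−j)} and for (r,j) ∈ I set c_{r,j} = C(b,j) · Σ_{0≤i≤a, 0≤k≤d(b−j), i+k=r} C(a,i)·C(d(b−j),k), where C denotes binomial coefficients. Let T ⊆ Δ_I be the trapezoid model: the set of points p such that p_{r,j} = c_{r,j}·s^r·(1−s)^{a+d(b−j)−r}·t^j·(1−t)^{b−j} for some s, t ∈ (0,1). Then for every u ∈ Δ_I, inf_{q∈T} D(u‖q) ≤ (a + b·d + b)·log 2; in particular sup_{u∈Δ_I} inf_{q∈T} D(u‖q) ≤ (a + b·d + b)·log 2. -/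
open scoped BigOperators Pointwise

attribute [local instance] Classical.propDecidable

/-! Evaluate the model at `s = t = 1/2`. There every coordinate is a positive integer times
`2^{-(a + d(b-j) + b)}`, hence at least `2^{-(a + bd + b)}`. The divergence of any distribution
`u` from a distribution all of whose entries are at least `ε` is at most `log ε⁻¹`, since
`u_i / q_i ≤ 1 / ε` and the weights `u_i` sum to one. -/

open Finset

theorem KL_le_log_inv_of_forall_le {ι : Type*} [Fintype ι] {u q : ι → ℝ}
    (hu : u ∈ simplex ι) {ε : ℝ} (hε : 0 < ε) (hq : ∀ i, ε ≤ q i) :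
    KL u q ≤ ((Real.log ε⁻¹ : ℝ) : EReal) := by
  obtain ⟨hu0, hu1⟩ := hu
  have hq0 : ∀ i, 0 < q i := fun i => hε.trans_le (hq i)
  have hterm : ∀ i, u i * Real.log (u i / q i) ≤ u i * Real.log ε⁻¹ := by
    intro i
    rcases (hu0 i).eq_or_lt with h | h
    · simp [← h]
    have hu1i : u i ≤ 1 := hu1 ▸ single_le_sum (fun j _ => hu0 j) (mem_univ i)
    have hratio : u i / q i ≤ 1 / ε := by gcongr; exact hq i
    refine mul_le_mul_of_nonneg_left ?_ (hu0 i)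
    exact Real.log_le_log (div_pos h (hq0 i)) (by rwa [← one_div])
  have hsum : ∑ i, u i * Real.log (u i / q i) ≤ Real.log ε⁻¹ :=
    calc ∑ i, u i * Real.log (u i / q i) ≤ ∑ i, u i * Real.log ε⁻¹ :=
          sum_le_sum fun i _ => hterm i
      _ = Real.log ε⁻¹ := by rw [← sum_mul, hu1, one_mul]
  rw [KL, if_pos fun i hi => absurd hi (hq0 i).ne']
  exact_mod_cast hsum

theorem divFrom_le_KL {ι : Type*} [Fintype ι] {M : Set (ι → ℝ)} {q : ι → ℝ}
    (hq : q ∈ M) (u : ι → ℝ) : divFrom M u ≤ KL u q :=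
  iInf₂_le q hq

theorem sum_choose_mul_choose_pos {a m r : ℕ} (hr : r ≤ a + m) :
    0 < ∑ i ∈ range (a + 1), ∑ k ∈ range (m + 1),
      if i + k = r then a.choose i * m.choose k else 0 := by
  refine sum_pos' (fun _ _ => Nat.zero_le _) ⟨min a r, mem_range.2 (by omega), ?_⟩
  refine sum_pos' (fun _ _ => Nat.zero_le _) ⟨r - min a r, mem_range.2 (by omega), ?_⟩
  rw [if_pos (by omega)]
  exact Nat.mul_pos (Nat.choose_pos (min_le_left _ _)) (Nat.choose_pos (by omega))

theorem half_pow_le_mul_half_pow {c r n j b N : ℕ} (hc : 0 < c) (hr : r ≤ n) (hj : j ≤ b)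
    (hN : n + b ≤ N) :
    (1 / 2 : ℝ) ^ N ≤
      c * (1 / 2) ^ r * (1 - 1 / 2) ^ (n - r) * (1 / 2) ^ j * (1 - 1 / 2) ^ (b - j) := by
  have hsplit : (1 / 2 : ℝ) ^ r * (1 - 1 / 2) ^ (n - r) * (1 / 2) ^ j * (1 - 1 / 2) ^ (b - j)
      = (1 / 2) ^ (n + b) := by
    rw [show (1 - 1 / 2 : ℝ) = 1 / 2 by norm_num, ← pow_add, ← pow_add, ← pow_add]
    congr 1
    omega
  calc (1 / 2 : ℝ) ^ N ≤ (1 / 2) ^ (n + b) :=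
        pow_le_pow_of_le_one (by norm_num) (by norm_num) hN
    _ ≤ c * (1 / 2) ^ (n + b) := le_mul_of_one_le_left (by positivity) (Nat.one_le_cast.2 hc)
    _ = _ := by rw [← hsplit]; ring

/-- The index set `I = {(r,j) : 0 ≤ j ≤ b, 0 ≤ r ≤ a + d(b−j)}` is encoded as a subtype of
`Fin (a+d·b+1) × Fin (b+1)`. -/
theorem stmt19_general {a b d : ℕ}
    (T : Set ({x : Fin (a + d * b + 1) × Fin (b + 1) //
        (x.1 : ℕ) ≤ a + d * (b - (x.2 : ℕ))} → ℝ))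
    (hT : T = {p | ∃ s t : ℝ, s ∈ Set.Ioo (0 : ℝ) 1 ∧ t ∈ Set.Ioo (0 : ℝ) 1 ∧
        ∀ x : {x : Fin (a + d * b + 1) × Fin (b + 1) //
            (x.1 : ℕ) ≤ a + d * (b - (x.2 : ℕ))},
          p x = ((Nat.choose b (x.1.2 : ℕ) *
              ∑ i ∈ Finset.range (a + 1), ∑ kk ∈ Finset.range (d * (b - (x.1.2 : ℕ)) + 1),
                if i + kk = (x.1.1 : ℕ)
                then Nat.choose a i * Nat.choose (d * (b - (x.1.2 : ℕ))) kk
                else 0 : ℕ) : ℝ) *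
            s ^ (x.1.1 : ℕ) * (1 - s) ^ (a + d * (b - (x.1.2 : ℕ)) - (x.1.1 : ℕ)) *
            t ^ (x.1.2 : ℕ) * (1 - t) ^ (b - (x.1.2 : ℕ))}) :
    (∀ u ∈ simplex {x : Fin (a + d * b + 1) × Fin (b + 1) //
        (x.1 : ℕ) ≤ a + d * (b - (x.2 : ℕ))},
      divFrom T u ≤ ((((a + b * d + b : ℕ) : ℝ) * Real.log 2 : ℝ) : EReal)) ∧
    (⨆ u ∈ simplex {x : Fin (a + d * b + 1) × Fin (b + 1) //
        (x.1 : ℕ) ≤ a + d * (b - (x.2 : ℕ))}, divFrom T u)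
      ≤ ((((a + b * d + b : ℕ) : ℝ) * Real.log 2 : ℝ) : EReal) := by
  obtain ⟨q, hqT, hq⟩ : ∃ q ∈ T, ∀ x, (1 / 2 : ℝ) ^ (a + b * d + b) ≤ q x := by
    subst hT
    refine ⟨_, ⟨1 / 2, 1 / 2, by norm_num, by norm_num, fun x => rfl⟩, fun x => ?_⟩
    have hjb : (x.1.2 : ℕ) ≤ b := Nat.lt_succ_iff.mp x.1.2.2
    have hdb : d * (b - x.1.2) ≤ b * d := mul_comm d b ▸ Nat.mul_le_mul_left d (Nat.sub_le b _)
    exact half_pow_le_mul_half_pow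
      (Nat.mul_pos (Nat.choose_pos hjb) (sum_choose_mul_choose_pos x.2)) x.2 hjb (by omega)
  have hbound : ∀ u ∈ simplex _,
      divFrom T u ≤ ((((a + b * d + b : ℕ) : ℝ) * Real.log 2 : ℝ) : EReal) :=
    fun u hu => (divFrom_le_KL hqT u).trans <| by
      simpa [Real.log_pow] using KL_le_log_inv_of_forall_le hu (by positivity) hq
  exact ⟨hbound, iSup₂_le hbound⟩

/-- the divergence from the trapezoid model `T_{a,b,d}` of any point of the
simplex is at most `(a + b·d + b)·log 2`; in particular so is the maximum divergence.
The index set `I = {(r,j) : 0 ≤ j ≤ b, 0 ≤ r ≤ a + d(b−j)}` is encoded as a subtype of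
`Fin (a+d·b+1) × Fin (b+1)`. -/
theorem stmt19 {a b d : ℕ} (ha : 1 ≤ a) (hb : 1 ≤ b)
    (T : Set ({x : Fin (a + d * b + 1) × Fin (b + 1) //
        (x.1 : ℕ) ≤ a + d * (b - (x.2 : ℕ))} → ℝ))
    (hT : T = {p | ∃ s t : ℝ, s ∈ Set.Ioo (0 : ℝ) 1 ∧ t ∈ Set.Ioo (0 : ℝ) 1 ∧
        ∀ x : {x : Fin (a + d * b + 1) × Fin (b + 1) //
            (x.1 : ℕ) ≤ a + d * (b - (x.2 : ℕ))},
          p x = ((Nat.choose b (x.1.2 : ℕ) *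
              ∑ i ∈ Finset.range (a + 1), ∑ kk ∈ Finset.range (d * (b - (x.1.2 : ℕ)) + 1),
                if i + kk = (x.1.1 : ℕ)
                then Nat.choose a i * Nat.choose (d * (b - (x.1.2 : ℕ))) kk
                else 0 : ℕ) : ℝ) *
            s ^ (x.1.1 : ℕ) * (1 - s) ^ (a + d * (b - (x.1.2 : ℕ)) - (x.1.1 : ℕ)) *
            t ^ (x.1.2 : ℕ) * (1 - t) ^ (b - (x.1.2 : ℕ))}) :
    (∀ u ∈ simplex {x : Fin (a + d * b + 1) × Fin (b + 1) //
        (x.1 : ℕ) ≤ a + d * (b - (x.2 : ℕ))},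
      divFrom T u ≤ ((((a + b * d + b : ℕ) : ℝ) * Real.log 2 : ℝ) : EReal)) ∧
    (⨆ u ∈ simplex {x : Fin (a + d * b + 1) × Fin (b + 1) //
        (x.1 : ℕ) ≤ a + d * (b - (x.2 : ℕ))}, divFrom T u)
      ≤ ((((a + b * d + b : ℕ) : ℝ) * Real.log 2 : ℝ) : EReal) :=
  stmt19_general T hT
end
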